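/- arXiv:1912.03443 — 11 statements merged into one kernel-verified Lean document; each statement's English description precedes it below -/
import Mathlib

section
/- In the UBS sampling model, the count estimator is unbiased for the join size: E[Ĵ_count] = γ_{1,1} = Σ_{v∈ι} (a v)·(b v). -/
/-!
Expanding the products, the sampled-join count is the sum, over `v` and the pairs `(i, j)`, of the
`{0,1}`-valued variables `U v * ξ v i * η v j`. Their three factors are distinct members of an
independent family, so each term has expectation `p * q₁ * q₂`, and by linearity
`E[Z] = p q₁ q₂ ∑ v, a v * b v`.
-/

open MeasureTheory ProbabilityTheory

section

variable {Ω : Type*} [MeasurableSpace Ω] {μ : Measure Ω}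

lemma integral_eq_measureReal_of_forall_eq_zero_or_one {X : Ω → ℝ} (hXm : Measurable X)
    (hX : ∀ ω, X ω = 0 ∨ X ω = 1) : ∫ ω, X ω ∂μ = μ.real {ω | X ω = 1} := by
  have hX_eq : X = {ω | X ω = 1}.indicator 1 := by
    funext ω
    rcases hX ω with h | h <;> simp [h]
  conv_lhs => rw [hX_eq]
  exact integral_indicator_one (hXm (measurableSet_singleton 1))

lemma integrable_of_forall_eq_zero_or_one [IsFiniteMeasure μ] {X : Ω → ℝ} (hXm : Measurable X)
    (hX : ∀ ω, X ω = 0 ∨ X ω = 1) : Integrable X μ :=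
  .of_bound hXm.aestronglyMeasurable 1 <| .of_forall fun ω => by rcases hX ω with h | h <;> simp [h]

lemma ProbabilityTheory.iIndepFun.integral_mul_mul {κ : Type*} {f : κ → Ω → ℝ}
    (hf : iIndepFun f μ) (hfm : ∀ k, Measurable (f k)) {i j k : κ}
    (hij : i ≠ j) (hik : i ≠ k) (hjk : j ≠ k) :
    ∫ ω, f i ω * f j ω * f k ω ∂μ = (∫ ω, f i ω ∂μ) * (∫ ω, f j ω ∂μ) * (∫ ω, f k ω ∂μ) := by
  have hij_k : IndepFun (f i * f j) (f k) μ := hf.indepFun_mul_left hfm i j k hik hjk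
  have hi_j : IndepFun (f i) (f j) μ := hf.indepFun hij
  rw [← hi_j.integral_mul_eq_mul_integral (hfm i).aestronglyMeasurable
      (hfm j).aestronglyMeasurable,
    ← hij_k.integral_mul_eq_mul_integral ((hfm i).mul (hfm j)).aestronglyMeasurable
      (hfm k).aestronglyMeasurable]
  rfl

lemma integral_sum_mul_sum_mul_sum {ι : Type*} {α β : ι → Type*} [Fintype ι]
    [∀ v, Fintype (α v)] [∀ v, Fintype (β v)]
    {U : ι → Ω → ℝ} {ξ : (v : ι) → α v → Ω → ℝ} {η : (v : ι) → β v → Ω → ℝ}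
    (h : ∀ v i j, Integrable (fun ω => U v ω * ξ v i ω * η v j ω) μ) :
    ∫ ω, ∑ v, U v ω * (∑ i, ξ v i ω) * (∑ j, η v j ω) ∂μ
      = ∑ v, ∑ i, ∑ j, ∫ ω, U v ω * ξ v i ω * η v j ω ∂μ := by
  have hexpand : ∀ ω, ∑ v, U v ω * (∑ i, ξ v i ω) * (∑ j, η v j ω)
      = ∑ v, ∑ i, ∑ j, U v ω * ξ v i ω * η v j ω := fun ω => by
    simp only [Finset.mul_sum, Finset.sum_mul]
    exact Finset.sum_congr rfl fun v _ => Finset.sum_comm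
  rw [integral_congr_ae (.of_forall hexpand), integral_finsetSum _ fun v _ =>
    integrable_finsetSum _ fun i _ => integrable_finsetSum _ fun j _ => h v i j]
  refine Finset.sum_congr rfl fun v _ => ?_
  rw [integral_finsetSum _ fun i _ => integrable_finsetSum _ fun j _ => h v i j]
  exact Finset.sum_congr rfl fun i _ => integral_finsetSum _ fun j _ => h v i j

end

theorem count_estimator_unbiased_general
    {Ω : Type*} [MeasurableSpace Ω] (μ : Measure Ω) [IsProbabilityMeasure μ]
    {ι : Type*} [Fintype ι]
    (a b : ι → ℕ) (p q₁ q₂ : ℝ)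
    (hp : 0 < p) (hq₁ : 0 < q₁) (hq₂ : 0 < q₂)
    (U : ι → Ω → ℝ) (ξ : (v : ι) → Fin (a v) → Ω → ℝ) (η : (v : ι) → Fin (b v) → Ω → ℝ)
    (hUm : ∀ v, Measurable (U v))
    (hξm : ∀ v i, Measurable (ξ v i))
    (hηm : ∀ v j, Measurable (η v j))
    (hU01 : ∀ v ω, U v ω = 0 ∨ U v ω = 1)
    (hξ01 : ∀ v i ω, ξ v i ω = 0 ∨ ξ v i ω = 1)
    (hη01 : ∀ v j ω, η v j ω = 0 ∨ η v j ω = 1)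
    (hUp : ∀ v, μ {ω | U v ω = 1} = ENNReal.ofReal p)
    (hξq : ∀ v i, μ {ω | ξ v i ω = 1} = ENNReal.ofReal q₁)
    (hηq : ∀ v j, μ {ω | η v j ω = 1} = ENNReal.ofReal q₂)
    (hIndep : iIndepFun (m := fun _ => (inferInstance : MeasurableSpace ℝ))
      (Sum.elim (fun v : ι => U v)
        (Sum.elim (fun vi : Σ v : ι, Fin (a v) => ξ vi.1 vi.2)
                  (fun vj : Σ v : ι, Fin (b v) => η vj.1 vj.2))) μ) :
    ∫ ω, (1 / (p * q₁ * q₂)) * ∑ v, U v ω * (∑ i, ξ v i ω) * (∑ j, η v j ω) ∂μ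
      = ∑ v, (a v : ℝ) * (b v : ℝ) := by
  have hterm01 : ∀ v i j ω,
      U v ω * ξ v i ω * η v j ω = 0 ∨ U v ω * ξ v i ω * η v j ω = 1 := fun v i j ω =>
    IsIdempotentElem.iff_eq_zero_or_one.1 <|
      ((IsIdempotentElem.iff_eq_zero_or_one.2 (hU01 v ω)).mul
        (IsIdempotentElem.iff_eq_zero_or_one.2 (hξ01 v i ω))).mul
        (IsIdempotentElem.iff_eq_zero_or_one.2 (hη01 v j ω))
  have hterm_int : ∀ v i j, Integrable (fun ω => U v ω * ξ v i ω * η v j ω) μ := fun v i j =>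
    integrable_of_forall_eq_zero_or_one (((hUm v).mul (hξm v i)).mul (hηm v j)) (hterm01 v i j)
  have hterm : ∀ v i j, ∫ ω, U v ω * ξ v i ω * η v j ω ∂μ = p * q₁ * q₂ := fun v i j => by
    refine (hIndep.integral_mul_mul (by rintro (v | ⟨v, i⟩ | ⟨v, j⟩) <;> simp [hUm, hξm, hηm])
      (i := .inl v) (j := .inr (.inl ⟨v, i⟩)) (k := .inr (.inr ⟨v, j⟩))
      (by simp) (by simp) (by simp)).trans ?_
    simp only [Sum.elim_inl, Sum.elim_inr,
      integral_eq_measureReal_of_forall_eq_zero_or_one (hUm v) (hU01 v),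
      integral_eq_measureReal_of_forall_eq_zero_or_one (hξm v i) (hξ01 v i),
      integral_eq_measureReal_of_forall_eq_zero_or_one (hηm v j) (hη01 v j),
      measureReal_def, hUp, hξq, hηq, ENNReal.toReal_ofReal hp.le,
      ENNReal.toReal_ofReal hq₁.le, ENNReal.toReal_ofReal hq₂.le]
  rw [integral_const_mul, integral_sum_mul_sum_mul_sum hterm_int]
  simp only [hterm, Finset.sum_const, Finset.card_univ, Fintype.card_fin, nsmul_eq_mul,
    Finset.mul_sum]
  refine Finset.sum_congr rfl fun v _ => ?_
  field_simp

/-- **Unbiasedness of the UBS count estimator.**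
Join-frequency model: `ι` indexes join-key values, `a b : ι → ℕ` are the key frequencies in the
two tables.  UBS sampling model: `U v` is Bernoulli(`p`) (the universe sampler), `ξ v i` are
Bernoulli(`q₁`) and `η v j` are Bernoulli(`q₂`) (the uniform samplers for the tuples of each
table), and the whole family is mutually independent.  The sampled-join count is
`Z ω = ∑ v, U v ω * (∑ i, ξ v i ω) * (∑ j, η v j ω)` and the count estimator is
`Ĵ_count = Z / (p q₁ q₂)`.  Then `E[Ĵ_count] = γ_{1,1} = ∑ v, a v * b v`. -/
theorem count_estimator_unbiased
    {Ω : Type*} [MeasurableSpace Ω] (μ : Measure Ω) [IsProbabilityMeasure μ]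
    {ι : Type*} [Fintype ι]
    (a b : ι → ℕ) (p q₁ q₂ : ℝ)
    (hp : 0 < p) (hp1 : p ≤ 1) (hq₁ : 0 < q₁) (hq₁1 : q₁ ≤ 1) (hq₂ : 0 < q₂) (hq₂1 : q₂ ≤ 1)
    (U : ι → Ω → ℝ) (ξ : (v : ι) → Fin (a v) → Ω → ℝ) (η : (v : ι) → Fin (b v) → Ω → ℝ)
    (hUm : ∀ v, Measurable (U v))
    (hξm : ∀ v i, Measurable (ξ v i))
    (hηm : ∀ v j, Measurable (η v j))
    (hU01 : ∀ v ω, U v ω = 0 ∨ U v ω = 1)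
    (hξ01 : ∀ v i ω, ξ v i ω = 0 ∨ ξ v i ω = 1)
    (hη01 : ∀ v j ω, η v j ω = 0 ∨ η v j ω = 1)
    (hUp : ∀ v, μ {ω | U v ω = 1} = ENNReal.ofReal p)
    (hξq : ∀ v i, μ {ω | ξ v i ω = 1} = ENNReal.ofReal q₁)
    (hηq : ∀ v j, μ {ω | η v j ω = 1} = ENNReal.ofReal q₂)
    (hIndep : iIndepFun (m := fun _ => (inferInstance : MeasurableSpace ℝ))
      (Sum.elim (fun v : ι => U v)
        (Sum.elim (fun vi : Σ v : ι, Fin (a v) => ξ vi.1 vi.2)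
                  (fun vj : Σ v : ι, Fin (b v) => η vj.1 vj.2))) μ) :
    ∫ ω, (1 / (p * q₁ * q₂)) * ∑ v, U v ω * (∑ i, ξ v i ω) * (∑ j, η v j ω) ∂μ
      = ∑ v, (a v : ℝ) * (b v : ℝ) :=
  count_estimator_unbiased_general μ a b p q₁ q₂ hp hq₁ hq₂ U ξ η hUm hξm hηm hU01 hξ01 hη01 hUp hξq
    hηq hIndep
end

section
/- (Lemma: variance of the count estimator.) In the UBS sampling model, Var(Ĵ_count) = ((1−p)/p)·γ_{2,2} + ((1−q₂)/(p q₂))·γ_{2,1} + ((1−q₁)/(p q₁))·γ_{1,2} + ((1−q₁)(1−q₂)/(p q₁ q₂))·γ_{1,1}. -/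
/-!
The estimator is a multiple of `∑ v, W v` with `W v = U v * S v * T v`, where `S v = ∑ i, ξ v i`
and `T v = ∑ j, η v j` are binomial with parameters `(a v, q₁)` and `(b v, q₂)`. Distinct keys use
disjoint sets of indicators, so the `W v` are independent and their variances add. Within a key,
`U v`, `S v` and `T v` are independent and `U v ^ 2 = U v`, so
`Var (W v) = p E[S v ^ 2] E[T v ^ 2] - (p E[S v] E[T v]) ^ 2`; the binomial moments
`E[S] = n q` and `E[S ^ 2] = n q (1 - q) + (n q) ^ 2` expand this into the four `γ` terms.
-/

open MeasureTheory ProbabilityTheory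

section Measurability

variable {Ω : Type*}

lemma measurable_biSup_comap {κ β : Type*} [mβ : MeasurableSpace β] (f : κ → Ω → β)
    {S : Set κ} {k : κ} (hk : k ∈ S) :
    Measurable[⨆ j ∈ S, mβ.comap (f j)] (f k) :=
  measurable_iff_comap_le.2 (le_iSup₂ (f := fun j (_ : j ∈ S) => mβ.comap (f j)) k hk)

lemma measurable_finsetSum_fn {κ : Type*} {m : MeasurableSpace Ω} {f : κ → Ω → ℝ}
    (s : Finset κ) (hf : ∀ k ∈ s, Measurable[m] (f k)) : Measurable[m] (∑ k ∈ s, f k) := by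
  rw [Finset.sum_fn]
  exact Finset.measurable_sum s hf

end Measurability

namespace ProbabilityTheory

variable {Ω : Type*} [MeasurableSpace Ω] {μ : Measure Ω}

lemma iIndepFun.indepFun_of_measurable_biSup {κ β γ γ' : Type*} [mβ : MeasurableSpace β]
    [MeasurableSpace γ] [MeasurableSpace γ'] {f : κ → Ω → β} (hf : iIndepFun f μ)
    (hfm : ∀ k, Measurable (f k)) {S T : Set κ} (hST : Disjoint S T) {X : Ω → γ} {Y : Ω → γ'}
    (hX : Measurable[⨆ k ∈ S, mβ.comap (f k)] X) (hY : Measurable[⨆ k ∈ T, mβ.comap (f k)] Y) :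
    IndepFun X Y μ := by
  rw [IndepFun_iff_Indep]
  exact indep_of_indep_of_le
    (indep_iSup_of_disjoint (fun k => (hfm k).comap_le) hf.iIndep hST) hX.comap_le hY.comap_le

structure IsBernoulli (X : Ω → ℝ) (r : ℝ) (μ : Measure Ω) : Prop where
  measurable : Measurable X
  eq_zero_or_eq_one : ∀ ω, X ω = 0 ∨ X ω = 1
  measure_eq_one : μ {ω | X ω = 1} = ENNReal.ofReal r

namespace IsBernoulli

variable {X : Ω → ℝ} {r : ℝ}

lemma eq_indicator (hX : IsBernoulli X r μ) : X = {ω | X ω = 1}.indicator 1 := by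
  funext ω
  rcases hX.eq_zero_or_eq_one ω with h | h <;> simp [h]

lemma sq_eq (hX : IsBernoulli X r μ) : X ^ 2 = X := by
  funext ω
  rcases hX.eq_zero_or_eq_one ω with h | h <;> simp [h]

lemma memLp [IsFiniteMeasure μ] (hX : IsBernoulli X r μ) (q : ENNReal) : MemLp X q μ := by
  refine memLp_of_bounded (a := 0) (b := 1) (Filter.Eventually.of_forall fun ω => ?_)
    hX.measurable.aestronglyMeasurable q
  rcases hX.eq_zero_or_eq_one ω with h | h <;> simp [h]

lemma integral_eq (hX : IsBernoulli X r μ) (hr : 0 ≤ r) : μ[X] = r := by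
  have hset : MeasurableSet {ω | X ω = 1} := hX.measurable (measurableSet_singleton 1)
  rw [hX.eq_indicator, integral_indicator_one hset, measureReal_def, hX.measure_eq_one,
    ENNReal.toReal_ofReal hr]

lemma variance_eq [IsProbabilityMeasure μ] (hX : IsBernoulli X r μ) (hr : 0 ≤ r) :
    variance X μ = r - r ^ 2 := by
  rw [variance_eq_sub (hX.memLp 2), hX.sq_eq, hX.integral_eq hr]

end IsBernoulli

section BernoulliSum

variable {κ : Type*} [Fintype κ] {X : κ → Ω → ℝ} {r : ℝ}

lemma integral_sum_of_isBernoulli [IsFiniteMeasure μ] (hr : 0 ≤ r)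
    (hX : ∀ k, IsBernoulli (X k) r μ) :
    μ[∑ k, X k] = Fintype.card κ * r := by
  simp only [Finset.sum_apply]
  rw [integral_finsetSum _ fun k _ => ((hX k).memLp 1).integrable le_rfl]
  simp [fun k => (hX k).integral_eq hr]

variable [IsProbabilityMeasure μ]

lemma variance_sum_of_isBernoulli (hr : 0 ≤ r) (hX : ∀ k, IsBernoulli (X k) r μ)
    (hindep : Pairwise fun i j => IndepFun (X i) (X j) μ) :
    variance (∑ k, X k) μ = Fintype.card κ * (r - r ^ 2) := by
  rw [IndepFun.variance_sum (fun k _ => (hX k).memLp 2) fun i _ j _ hij => hindep hij]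
  simp [fun k => (hX k).variance_eq hr, mul_sub]

lemma integral_sq_sum_of_isBernoulli (hr : 0 ≤ r) (hX : ∀ k, IsBernoulli (X k) r μ)
    (hindep : Pairwise fun i j => IndepFun (X i) (X j) μ) :
    μ[(∑ k, X k) ^ 2] = Fintype.card κ * (r - r ^ 2) + (Fintype.card κ * r) ^ 2 := by
  have h := variance_eq_sub (memLp_finsetSum' Finset.univ fun k _ => (hX k).memLp (μ := μ) 2)
  rw [variance_sum_of_isBernoulli hr hX hindep, integral_sum_of_isBernoulli hr hX] at h
  linarith

end BernoulliSum

section IndepProduct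

variable {X Y : Ω → ℝ}

lemma IndepFun.sq (hXY : IndepFun X Y μ) : IndepFun (X ^ 2) (Y ^ 2) μ := by
  have h := hXY.comp (φ := fun x => x ^ 2) (ψ := fun x => x ^ 2)
    (measurable_id.pow_const 2) (measurable_id.pow_const 2)
  exact h

lemma IndepFun.integral_mul_sq (hXY : IndepFun X Y μ) (hX : AEStronglyMeasurable X μ)
    (hY : AEStronglyMeasurable Y μ) :
    μ[(X * Y) ^ 2] = μ[X ^ 2] * μ[Y ^ 2] := by
  rw [mul_pow, hXY.sq.integral_mul_eq_mul_integral (hX.pow 2) (hY.pow 2)]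

lemma IndepFun.memLp_two_mul (hXY : IndepFun X Y μ) (hX : MemLp X 2 μ) (hY : MemLp Y 2 μ) :
    MemLp (X * Y) 2 μ := by
  refine (memLp_two_iff_integrable_sq (hX.1.mul hY.1)).2 ?_
  rw [← Pi.pow_def, mul_pow]
  exact hXY.sq.integrable_mul hX.integrable_sq hY.integrable_sq

lemma IndepFun.variance_mul [IsProbabilityMeasure μ] (hXY : IndepFun X Y μ) (hX : MemLp X 2 μ)
    (hY : MemLp Y 2 μ) :
    variance (X * Y) μ = μ[X ^ 2] * μ[Y ^ 2] - (μ[X] * μ[Y]) ^ 2 := by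
  rw [variance_eq_sub (hXY.memLp_two_mul hX hY), hXY.integral_mul_sq hX.1 hY.1,
    hXY.integral_mul_eq_mul_integral hX.1 hY.1]

end IndepProduct

end ProbabilityTheory

section UBS

variable {Ω : Type*} {ι : Type*} {a b : ι → ℕ}
  (U : ι → Ω → ℝ) (ξ : (v : ι) → Fin (a v) → Ω → ℝ) (η : (v : ι) → Fin (b v) → Ω → ℝ)

abbrev UBSIndex (a b : ι → ℕ) : Type _ := ι ⊕ ((Σ v, Fin (a v)) ⊕ (Σ v, Fin (b v)))

-- Definitionally the family in the independence hypothesis of `count_estimator_variance`.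
abbrev ubsFamily : UBSIndex a b → Ω → ℝ :=
  Sum.elim U (Sum.elim (fun vi => ξ vi.1 vi.2) (fun vj => η vj.1 vj.2))

def ubsKey : UBSIndex a b → ι :=
  Sum.elim id (Sum.elim Sigma.fst Sigma.fst)

abbrev ubsSigma (S : Set (UBSIndex a b)) : MeasurableSpace Ω :=
  ⨆ k ∈ S, MeasurableSpace.comap (ubsFamily U ξ η k) Real.measurableSpace

def keyJoinCount (v : ι) : Ω → ℝ := U v * (∑ i, ξ v i) * ∑ j, η v j

variable {U ξ η}

lemma measurable_keyJoinCount {m : MeasurableSpace Ω} {v : ι} (hU : Measurable[m] (U v))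
    (hξ : ∀ i, Measurable[m] (ξ v i)) (hη : ∀ j, Measurable[m] (η v j)) :
    Measurable[m] (keyJoinCount U ξ η v) :=
  (hU.mul (measurable_finsetSum_fn _ fun i _ => hξ i)).mul
    (measurable_finsetSum_fn _ fun j _ => hη j)

section ubsSigma

variable {S : Set (UBSIndex a b)} {v : ι}

lemma measurable_ubsSigma_universe (hv : .inl v ∈ S) : Measurable[ubsSigma U ξ η S] (U v) :=
  measurable_biSup_comap (ubsFamily U ξ η) hv

lemma measurable_ubsSigma_left {i : Fin (a v)} (hi : .inr (.inl ⟨v, i⟩) ∈ S) :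
    Measurable[ubsSigma U ξ η S] (ξ v i) :=
  measurable_biSup_comap (ubsFamily U ξ η) hi

lemma measurable_ubsSigma_right {j : Fin (b v)} (hj : .inr (.inr ⟨v, j⟩) ∈ S) :
    Measurable[ubsSigma U ξ η S] (η v j) :=
  measurable_biSup_comap (ubsFamily U ξ η) hj

end ubsSigma

variable [MeasurableSpace Ω] {μ : Measure Ω}

lemma measurable_ubsFamily (hU : ∀ v, Measurable (U v)) (hξ : ∀ v i, Measurable (ξ v i))
    (hη : ∀ v j, Measurable (η v j)) : ∀ k, Measurable (ubsFamily U ξ η k)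
  | .inl v => hU v
  | .inr (.inl ⟨v, i⟩) => hξ v i
  | .inr (.inr ⟨v, j⟩) => hη v j

lemma indepFun_sum_sum (hU : ∀ v, Measurable (U v)) (hξ : ∀ v i, Measurable (ξ v i))
    (hη : ∀ v j, Measurable (η v j)) (hF : iIndepFun (ubsFamily U ξ η) μ) (v : ι) :
    IndepFun (∑ i, ξ v i) (∑ j, η v j) μ := by
  let S : Set (UBSIndex a b) := Set.range fun i => .inr (.inl ⟨v, i⟩)
  let T : Set (UBSIndex a b) := Set.range fun j => .inr (.inr ⟨v, j⟩)
  have hξS (i : Fin (a v)) : Measurable[ubsSigma U ξ η S] (ξ v i) :=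
    measurable_ubsSigma_left (Set.mem_range_self i)
  have hηT (j : Fin (b v)) : Measurable[ubsSigma U ξ η T] (η v j) :=
    measurable_ubsSigma_right (Set.mem_range_self j)
  exact hF.indepFun_of_measurable_biSup (measurable_ubsFamily hU hξ hη) (S := S) (T := T)
    (by simp [S, T, Set.disjoint_range_iff])
    (measurable_finsetSum_fn _ fun i _ => hξS i) (measurable_finsetSum_fn _ fun j _ => hηT j)

lemma indepFun_mul_sum_sum (hU : ∀ v, Measurable (U v)) (hξ : ∀ v i, Measurable (ξ v i))
    (hη : ∀ v j, Measurable (η v j)) (hF : iIndepFun (ubsFamily U ξ η) μ) (v : ι) :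
    IndepFun (U v) ((∑ i, ξ v i) * ∑ j, η v j) μ := by
  let S : Set (UBSIndex a b) := {.inl v}
  have hξS (i : Fin (a v)) : Measurable[ubsSigma U ξ η Sᶜ] (ξ v i) :=
    measurable_ubsSigma_left (by simp [S])
  have hηS (j : Fin (b v)) : Measurable[ubsSigma U ξ η Sᶜ] (η v j) :=
    measurable_ubsSigma_right (by simp [S])
  exact hF.indepFun_of_measurable_biSup (measurable_ubsFamily hU hξ hη) (S := S) (T := Sᶜ)
    disjoint_compl_right (measurable_ubsSigma_universe (Set.mem_singleton _))
    ((measurable_finsetSum_fn _ fun i _ => hξS i).mul (measurable_finsetSum_fn _ fun j _ => hηS j))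

lemma indepFun_keyJoinCount (hU : ∀ v, Measurable (U v)) (hξ : ∀ v i, Measurable (ξ v i))
    (hη : ∀ v j, Measurable (η v j)) (hF : iIndepFun (ubsFamily U ξ η) μ) {v w : ι}
    (hvw : v ≠ w) : IndepFun (keyJoinCount U ξ η v) (keyJoinCount U ξ η w) μ :=
  hF.indepFun_of_measurable_biSup (measurable_ubsFamily hU hξ hη)
    ((Set.disjoint_singleton.2 hvw).preimage ubsKey)
    (measurable_keyJoinCount (measurable_ubsSigma_universe rfl)
      (fun _ => measurable_ubsSigma_left rfl) (fun _ => measurable_ubsSigma_right rfl))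
    (measurable_keyJoinCount (measurable_ubsSigma_universe rfl)
      (fun _ => measurable_ubsSigma_left rfl) (fun _ => measurable_ubsSigma_right rfl))

variable [IsProbabilityMeasure μ] {p q₁ q₂ : ℝ}

lemma memLp_keyJoinCount (hU : ∀ v, IsBernoulli (U v) p μ)
    (hξ : ∀ v i, IsBernoulli (ξ v i) q₁ μ) (hη : ∀ v j, IsBernoulli (η v j) q₂ μ)
    (hF : iIndepFun (ubsFamily U ξ η) μ) (v : ι) :
    MemLp (keyJoinCount U ξ η v) 2 μ := by
  have hUm v := (hU v).measurable
  have hξm v i := (hξ v i).measurable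
  have hηm v j := (hη v j).measurable
  rw [keyJoinCount, mul_assoc]
  exact (indepFun_mul_sum_sum hUm hξm hηm hF v).memLp_two_mul ((hU v).memLp 2)
    ((indepFun_sum_sum hUm hξm hηm hF v).memLp_two_mul
      (memLp_finsetSum' _ fun i _ => (hξ v i).memLp 2)
      (memLp_finsetSum' _ fun j _ => (hη v j).memLp 2))

lemma variance_keyJoinCount (hp : 0 ≤ p) (hq₁ : 0 ≤ q₁) (hq₂ : 0 ≤ q₂)
    (hU : ∀ v, IsBernoulli (U v) p μ) (hξ : ∀ v i, IsBernoulli (ξ v i) q₁ μ)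
    (hη : ∀ v j, IsBernoulli (η v j) q₂ μ) (hF : iIndepFun (ubsFamily U ξ η) μ) (v : ι) :
    variance (keyJoinCount U ξ η v) μ
      = p * ((a v * (q₁ - q₁ ^ 2) + (a v * q₁) ^ 2) * (b v * (q₂ - q₂ ^ 2) + (b v * q₂) ^ 2))
        - (p * (a v * q₁ * (b v * q₂))) ^ 2 := by
  have hUm v := (hU v).measurable
  have hξm v i := (hξ v i).measurable
  have hηm v j := (hη v j).measurable
  have hS : MemLp (∑ i, ξ v i) 2 μ := memLp_finsetSum' _ fun i _ => (hξ v i).memLp 2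
  have hT : MemLp (∑ j, η v j) 2 μ := memLp_finsetSum' _ fun j _ => (hη v j).memLp 2
  have hST := indepFun_sum_sum hUm hξm hηm hF v
  have hξξ : Pairwise fun i i' => IndepFun (ξ v i) (ξ v i') μ := fun i i' hii' =>
    hF.indepFun (i := .inr (.inl ⟨v, i⟩)) (j := .inr (.inl ⟨v, i'⟩)) (by simpa using hii')
  have hηη : Pairwise fun j j' => IndepFun (η v j) (η v j') μ := fun j j' hjj' =>
    hF.indepFun (i := .inr (.inr ⟨v, j⟩)) (j := .inr (.inr ⟨v, j'⟩)) (by simpa using hjj')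
  rw [keyJoinCount, mul_assoc, (indepFun_mul_sum_sum hUm hξm hηm hF v).variance_mul
      ((hU v).memLp 2) (hST.memLp_two_mul hS hT), hST.integral_mul_sq hS.1 hT.1,
    hST.integral_mul_eq_mul_integral hS.1 hT.1, (hU v).sq_eq, (hU v).integral_eq hp,
    integral_sq_sum_of_isBernoulli hq₁ (hξ v) hξξ, integral_sq_sum_of_isBernoulli hq₂ (hη v) hηη,
    integral_sum_of_isBernoulli hq₁ (hξ v), integral_sum_of_isBernoulli hq₂ (hη v),
    Fintype.card_fin, Fintype.card_fin]

end UBS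

lemma key_variance_expansion {p q₁ q₂ : ℝ} (hp : p ≠ 0) (hq₁ : q₁ ≠ 0) (hq₂ : q₂ ≠ 0) (A B : ℝ) :
    (1 / (p * q₁ * q₂)) ^ 2 * (p * ((A * (q₁ - q₁ ^ 2) + (A * q₁) ^ 2)
        * (B * (q₂ - q₂ ^ 2) + (B * q₂) ^ 2)) - (p * (A * q₁ * (B * q₂))) ^ 2)
      = ((1 - p) / p) * (A ^ 2 * B ^ 2) + ((1 - q₂) / (p * q₂)) * (A ^ 2 * B)
        + ((1 - q₁) / (p * q₁)) * (A * B ^ 2)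
        + ((1 - q₁) * (1 - q₂) / (p * q₁ * q₂)) * (A * B) := by
  field_simp
  ring

theorem count_estimator_variance_general
    {Ω : Type*} [MeasurableSpace Ω] (μ : Measure Ω) [IsProbabilityMeasure μ]
    {ι : Type*} [Fintype ι]
    (a b : ι → ℕ) (p q₁ q₂ : ℝ)
    (hp : 0 < p) (hq₁ : 0 < q₁) (hq₂ : 0 < q₂)
    (U : ι → Ω → ℝ) (ξ : (v : ι) → Fin (a v) → Ω → ℝ) (η : (v : ι) → Fin (b v) → Ω → ℝ)
    (hUm : ∀ v, Measurable (U v))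
    (hξm : ∀ v i, Measurable (ξ v i))
    (hηm : ∀ v j, Measurable (η v j))
    (hU01 : ∀ v ω, U v ω = 0 ∨ U v ω = 1)
    (hξ01 : ∀ v i ω, ξ v i ω = 0 ∨ ξ v i ω = 1)
    (hη01 : ∀ v j ω, η v j ω = 0 ∨ η v j ω = 1)
    (hUp : ∀ v, μ {ω | U v ω = 1} = ENNReal.ofReal p)
    (hξq : ∀ v i, μ {ω | ξ v i ω = 1} = ENNReal.ofReal q₁)
    (hηq : ∀ v j, μ {ω | η v j ω = 1} = ENNReal.ofReal q₂)
    (hIndep : iIndepFun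
      (Sum.elim (fun v : ι => U v)
        (Sum.elim (fun vi : Σ v : ι, Fin (a v) => ξ vi.1 vi.2)
                  (fun vj : Σ v : ι, Fin (b v) => η vj.1 vj.2))) μ) :
    variance (fun ω => (1 / (p * q₁ * q₂)) *
        ∑ v, U v ω * (∑ i, ξ v i ω) * (∑ j, η v j ω)) μ
      = ((1 - p) / p) * (∑ v, (a v : ℝ) ^ 2 * (b v : ℝ) ^ 2)
        + ((1 - q₂) / (p * q₂)) * (∑ v, (a v : ℝ) ^ 2 * (b v : ℝ))
        + ((1 - q₁) / (p * q₁)) * (∑ v, (a v : ℝ) * (b v : ℝ) ^ 2)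
        + ((1 - q₁) * (1 - q₂) / (p * q₁ * q₂)) * (∑ v, (a v : ℝ) * (b v : ℝ)) := by
  have hU : ∀ v, IsBernoulli (U v) p μ := fun v => ⟨hUm v, hU01 v, hUp v⟩
  have hξ : ∀ v i, IsBernoulli (ξ v i) q₁ μ := fun v i => ⟨hξm v i, hξ01 v i, hξq v i⟩
  have hη : ∀ v j, IsBernoulli (η v j) q₂ μ := fun v j => ⟨hηm v j, hη01 v j, hηq v j⟩
  have hJ : (fun ω => (1 / (p * q₁ * q₂)) * ∑ v, U v ω * (∑ i, ξ v i ω) * (∑ j, η v j ω))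
      = fun ω => (1 / (p * q₁ * q₂)) * (∑ v, keyJoinCount U ξ η v) ω := by
    simp [keyJoinCount, Finset.sum_apply]
  rw [hJ, variance_const_mul, IndepFun.variance_sum
    (fun v _ => memLp_keyJoinCount hU hξ hη hIndep v)
    (fun v _ w _ hvw => indepFun_keyJoinCount hUm hξm hηm hIndep hvw), Finset.mul_sum]
  simp only [variance_keyJoinCount hp.le hq₁.le hq₂.le hU hξ hη hIndep,
    key_variance_expansion hp.ne' hq₁.ne' hq₂.ne', Finset.sum_add_distrib, Finset.mul_sum]

/-- **Variance of the UBS count estimator.**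
Join-frequency model: `ι` indexes join-key values, `a b : ι → ℕ` are the key frequencies in the
two tables.  UBS sampling model: `U v` is Bernoulli(`p`) (the universe sampler), `ξ v i` are
Bernoulli(`q₁`) and `η v j` are Bernoulli(`q₂`) (the uniform samplers for the tuples of each
table), and the whole family is mutually independent.  The sampled-join count is
`Z ω = ∑ v, U v ω * (∑ i, ξ v i ω) * (∑ j, η v j ω)` and the count estimator is
`Ĵ_count = Z / (p q₁ q₂)`.  Then
`Var(Ĵ_count) = ((1−p)/p)·γ₂₂ + ((1−q₂)/(p q₂))·γ₂₁ + ((1−q₁)/(p q₁))·γ₁₂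
+ ((1−q₁)(1−q₂)/(p q₁ q₂))·γ₁₁`, where `γᵢⱼ = ∑ v, (a v)^i (b v)^j`. -/
theorem count_estimator_variance
    {Ω : Type*} [MeasurableSpace Ω] (μ : Measure Ω) [IsProbabilityMeasure μ]
    {ι : Type*} [Fintype ι]
    (a b : ι → ℕ) (p q₁ q₂ : ℝ)
    (hp : 0 < p) (hp1 : p ≤ 1) (hq₁ : 0 < q₁) (hq₁1 : q₁ ≤ 1) (hq₂ : 0 < q₂) (hq₂1 : q₂ ≤ 1)
    (U : ι → Ω → ℝ) (ξ : (v : ι) → Fin (a v) → Ω → ℝ) (η : (v : ι) → Fin (b v) → Ω → ℝ)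
    (hUm : ∀ v, Measurable (U v))
    (hξm : ∀ v i, Measurable (ξ v i))
    (hηm : ∀ v j, Measurable (η v j))
    (hU01 : ∀ v ω, U v ω = 0 ∨ U v ω = 1)
    (hξ01 : ∀ v i ω, ξ v i ω = 0 ∨ ξ v i ω = 1)
    (hη01 : ∀ v j ω, η v j ω = 0 ∨ η v j ω = 1)
    (hUp : ∀ v, μ {ω | U v ω = 1} = ENNReal.ofReal p)
    (hξq : ∀ v i, μ {ω | ξ v i ω = 1} = ENNReal.ofReal q₁)
    (hηq : ∀ v j, μ {ω | η v j ω = 1} = ENNReal.ofReal q₂)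
    (hIndep : iIndepFun
      (Sum.elim (fun v : ι => U v)
        (Sum.elim (fun vi : Σ v : ι, Fin (a v) => ξ vi.1 vi.2)
                  (fun vj : Σ v : ι, Fin (b v) => η vj.1 vj.2))) μ) :
    variance (fun ω => (1 / (p * q₁ * q₂)) *
        ∑ v, U v ω * (∑ i, ξ v i ω) * (∑ j, η v j ω)) μ
      = ((1 - p) / p) * (∑ v, (a v : ℝ) ^ 2 * (b v : ℝ) ^ 2)
        + ((1 - q₂) / (p * q₂)) * (∑ v, (a v : ℝ) ^ 2 * (b v : ℝ))
        + ((1 - q₁) / (p * q₁)) * (∑ v, (a v : ℝ) * (b v : ℝ) ^ 2)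
        + ((1 - q₁) * (1 - q₂) / (p * q₁ * q₂)) * (∑ v, (a v : ℝ) * (b v : ℝ)) :=
  count_estimator_variance_general μ a b p q₁ q₂ hp hq₁ hq₂ U ξ η hUm hξm hηm hU01 hξ01 hη01 hUp hξq
    hηq hIndep
end

section
/- (Lemma: equal universe rates are optimal for COUNT.) Fix p₁ ∈ (0,1], q₁ ∈ (0,1], and an effective sampling rate ε₂ ∈ (0,1] with ε₂ ≤ p₁. Then for every p₂ with ε₂ ≤ p₂ ≤ 1 (and corresponding uniform rate q₂ = ε₂/p₂), W_count(p₁, q₁, p₂, ε₂/p₂) ≥ W_count(p₁, q₁, p₁, ε₂/p₁); that is, the count-estimator variance is minimized over p₂ ∈ [ε₂, 1] at p₂ = p₁. -/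
/-!
With `q₂ = ε₂ / p₂` and `m = min p₁ p₂`, the variance splits as
`W = A / m + (B / ε₂) · (p₂ / m) - γ₂₂` with coefficients `A, B ≥ 0` that do not depend on `p₂`.
Both `1 / m` and `p₂ / m` are minimised at `p₂ = p₁` (where they equal `1 / p₁` and `1`).
-/

/-- `γ_{i,j} = ∑ v, (a v)^i (b v)^j`, the joint frequency moments of the two tables. -/
noncomputable def gammaMoment {ι : Type*} [Fintype ι] (a b : ι → ℕ) (i j : ℕ) : ℝ :=
  ∑ v, (a v : ℝ) ^ i * (b v : ℝ) ^ j

/-- Variance of the UBS count estimator when the two tables are sampled with parameters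
`(p₁, q₁)` and `(p₂, q₂)` sharing the same hash; `m = min p₁ p₂` is the effective
universe sampling rate of the join. -/
noncomputable def Wcount {ι : Type*} [Fintype ι] (a b : ι → ℕ) (p₁ q₁ p₂ q₂ : ℝ) : ℝ :=
  ((1 - min p₁ p₂) / min p₁ p₂) * gammaMoment a b 2 2
    + ((1 - q₂) / (min p₁ p₂ * q₂)) * gammaMoment a b 2 1
    + ((1 - q₁) / (min p₁ p₂ * q₁)) * gammaMoment a b 1 2
    + ((1 - q₁) * (1 - q₂) / (min p₁ p₂ * q₁ * q₂)) * gammaMoment a b 1 1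

section GammaMoment

variable {ι : Type*} [Fintype ι] (a b : ι → ℕ)

lemma gammaMoment_nonneg (i j : ℕ) : 0 ≤ gammaMoment a b i j :=
  Finset.sum_nonneg fun _ _ => by positivity

lemma gammaMoment_le_of_le {j k : ℕ} (i : ℕ) (hj : j ≠ 0) (hjk : j ≤ k) :
    gammaMoment a b i j ≤ gammaMoment a b i k := by
  refine Finset.sum_le_sum fun v _ => mul_le_mul_of_nonneg_left ?_ (by positivity)
  rcases Nat.eq_zero_or_pos (b v) with hv | hv
  · simp [hv, hj]
  · exact pow_le_pow_right₀ (by exact_mod_cast hv) hjk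

end GammaMoment

lemma Wcount_uniform_rate {ι : Type*} [Fintype ι] (a b : ι → ℕ) {p₁ q₁ p₂ ε : ℝ}
    (hp₁ : 0 < p₁) (hp₂ : 0 < p₂) (hq₁ : 0 < q₁) (hε : 0 < ε) :
    Wcount a b p₁ q₁ p₂ (ε / p₂) =
      (gammaMoment a b 2 2 - gammaMoment a b 2 1
          + (1 - q₁) / q₁ * (gammaMoment a b 1 2 - gammaMoment a b 1 1)) / min p₁ p₂
        + (gammaMoment a b 2 1 + (1 - q₁) / q₁ * gammaMoment a b 1 1) / ε * (p₂ / min p₁ p₂)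
        - gammaMoment a b 2 2 := by
  have hm : 0 < min p₁ p₂ := lt_min hp₁ hp₂
  unfold Wcount
  field_simp
  ring

theorem equal_universe_rate_optimal_for_count_general
    {ι : Type*} [Fintype ι] (a b : ι → ℕ)
    (p₁ q₁ ε₂ : ℝ) (hp₁0 : 0 < p₁) (hq₁0 : 0 < q₁) (hq₁1 : q₁ ≤ 1)
    (hε₂0 : 0 < ε₂) :
    ∀ p₂, ε₂ ≤ p₂ → p₂ ≤ 1 →
      Wcount a b p₁ q₁ p₁ (ε₂ / p₁) ≤ Wcount a b p₁ q₁ p₂ (ε₂ / p₂) := by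
  intro p₂ hε₂p₂ _
  have hp₂0 : 0 < p₂ := hε₂0.trans_le hε₂p₂
  have hm : 0 < min p₁ p₂ := lt_min hp₁0 hp₂0
  have hc : 0 ≤ (1 - q₁) / q₁ := div_nonneg (sub_nonneg.mpr hq₁1) hq₁0.le
  have hA : 0 ≤ gammaMoment a b 2 2 - gammaMoment a b 2 1
      + (1 - q₁) / q₁ * (gammaMoment a b 1 2 - gammaMoment a b 1 1) :=
    add_nonneg (sub_nonneg.mpr (gammaMoment_le_of_le a b 2 one_ne_zero one_le_two))
      (mul_nonneg hc (sub_nonneg.mpr (gammaMoment_le_of_le a b 1 one_ne_zero one_le_two)))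
  have hB : 0 ≤ gammaMoment a b 2 1 + (1 - q₁) / q₁ * gammaMoment a b 1 1 :=
    add_nonneg (gammaMoment_nonneg a b 2 1) (mul_nonneg hc (gammaMoment_nonneg a b 1 1))
  rw [Wcount_uniform_rate a b hp₁0 hp₂0 hq₁0 hε₂0, Wcount_uniform_rate a b hp₁0 hp₁0 hq₁0 hε₂0,
    min_self, div_self hp₁0.ne']
  gcongr
  · exact min_le_left p₁ p₂
  · exact (one_le_div hm).mpr (min_le_right p₁ p₂)

/-- **Equal universe rates are optimal for COUNT.**  Fixing `(p₁, q₁)` for the first table and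
the effective rate `ε₂` for the second (with `ε₂ ≤ p₁`), the count-estimator variance over
`p₂ ∈ [ε₂, 1]` (with uniform rate `q₂ = ε₂ / p₂`) is minimized at `p₂ = p₁`. -/
theorem equal_universe_rate_optimal_for_count
    {ι : Type*} [Fintype ι] (a b : ι → ℕ)
    (p₁ q₁ ε₂ : ℝ) (hp₁0 : 0 < p₁) (hp₁1 : p₁ ≤ 1) (hq₁0 : 0 < q₁) (hq₁1 : q₁ ≤ 1)
    (hε₂0 : 0 < ε₂) (hε₂1 : ε₂ ≤ 1) (hle : ε₂ ≤ p₁) :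
    ∀ p₂, ε₂ ≤ p₂ → p₂ ≤ 1 →
      Wcount a b p₁ q₁ p₁ (ε₂ / p₁) ≤ Wcount a b p₁ q₁ p₂ (ε₂ / p₂) :=
  equal_universe_rate_optimal_for_count_general a b p₁ q₁ ε₂ hp₁0 hq₁0 hq₁1 hε₂0
end

section
/- (Theorem: optimal centralized UBS parameters for COUNT.) Assume γ_{1,1} > 0. Let p* = min{ 1, max{ ε₁, ε₂, √( ε₁ε₂·(γ_{2,2} − γ_{1,2} − γ_{2,1} + γ_{1,1}) / γ_{1,1} ) } }. Then p* ∈ [max(ε₁,ε₂), 1] and for every p with max(ε₁, ε₂) ≤ p ≤ 1, V_count(p*) ≤ V_count(p); i.e., p* minimizes the count-estimator variance over all admissible universe sampling rates. -/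
/-- Variance of the UBS count estimator in the centralized setting, as a function of the
common universe sampling rate `p` (with uniform rates `ε₁ / p` and `ε₂ / p`). -/
noncomputable def Vcount {ι : Type*} [Fintype ι] (a b : ι → ℕ) (ε₁ ε₂ p : ℝ) : ℝ :=
  (1 / p - 1) * gammaMoment a b 2 2
    + (1 / ε₂ - 1 / p) * gammaMoment a b 2 1
    + (1 / ε₁ - 1 / p) * gammaMoment a b 1 2
    + (p / (ε₁ * ε₂) - 1 / ε₁ - 1 / ε₂ + 1 / p) * gammaMoment a b 1 1

/-!
Writing `A = γ₂₂ − γ₁₂ − γ₂₁ + γ₁₁` and `B = γ₁₁ / (ε₁ε₂)`, the variance is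
`V_count(p) = A / p + B p + const`. For `B > 0` the map `f x = A / x + B x` decreases on
`(0, √(A/B)]` and increases on `[√(A/B), ∞)`, because `f y − f x = (y − x)(B x y − A) / (x y)`.
Hence on an interval `[m, M] ⊆ (0, ∞)` it is minimized at `√(A/B)` clamped to `[m, M]`, which
is `p*` for `m = max ε₁ ε₂` and `M = 1`.
-/

section InverseLinear

variable {A B x y : ℝ}

lemma div_add_mul_sub_div_add_mul (hx : x ≠ 0) (hy : y ≠ 0) :
    (A / y + B * y) - (A / x + B * x) = (y - x) * (B * (x * y) - A) / (x * y) := by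
  field_simp
  ring

lemma div_add_mul_le_div_add_mul_of_le_sqrt (hB : 0 < B) (hx : 0 < x) (hxy : x ≤ y)
    (hy : y ≤ √(A / B)) : A / y + B * y ≤ A / x + B * x := by
  have hy2 : y ^ 2 ≤ A / B := (Real.le_sqrt' (hx.trans_le hxy)).mp hy
  have hprod : B * (x * y) ≤ A := by
    have hxy2 : x * y ≤ y ^ 2 := by nlinarith
    rw [le_div_iff₀ hB] at hy2
    nlinarith
  have hdiff := div_add_mul_sub_div_add_mul (A := A) (B := B) hx.ne' (hx.trans_le hxy).ne'
  have : (y - x) * (B * (x * y) - A) / (x * y) ≤ 0 :=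
    div_nonpos_of_nonpos_of_nonneg (mul_nonpos_of_nonneg_of_nonpos (by linarith) (by linarith))
      (mul_pos hx (hx.trans_le hxy)).le
  linarith

lemma div_add_mul_le_div_add_mul_of_sqrt_le (hB : 0 < B) (hx : 0 < x) (hxy : x ≤ y)
    (hx' : √(A / B) ≤ x) : A / x + B * x ≤ A / y + B * y := by
  have hx2 : A / B ≤ x ^ 2 := (Real.sqrt_le_left hx.le).mp hx'
  have hprod : A ≤ B * (x * y) := by
    have hxy2 : x ^ 2 ≤ x * y := by nlinarith
    rw [div_le_iff₀ hB] at hx2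
    nlinarith
  have hdiff := div_add_mul_sub_div_add_mul (A := A) (B := B) hx.ne' (hx.trans_le hxy).ne'
  have : 0 ≤ (y - x) * (B * (x * y) - A) / (x * y) :=
    div_nonneg (mul_nonneg (by linarith) (by linarith)) (mul_pos hx (hx.trans_le hxy)).le
  linarith

lemma min_max_mem_Icc {m M : ℝ} (s : ℝ) (hmM : m ≤ M) : min M (max m s) ∈ Set.Icc m M :=
  ⟨le_min hmM (le_max_left _ _), min_le_left _ _⟩

theorem isMinOn_div_add_mul_clamp_sqrt {m M : ℝ} (hB : 0 < B) (hm : 0 < m) (hmM : m ≤ M) :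
    IsMinOn (fun x => A / x + B * x) (Set.Icc m M) (min M (max m √(A / B))) := by
  set s := √(A / B)
  set q := min M (max m s)
  have hq := min_max_mem_Icc s hmM
  refine isMinOn_iff.mpr fun p ⟨hmp, hpM⟩ => ?_
  rcases le_total p q with hpq | hqp
  · rcases le_total m s with hms | hsm
    · have hqs : q ≤ s := (min_le_right _ _).trans (max_eq_right hms).le
      exact div_add_mul_le_div_add_mul_of_le_sqrt hB (hm.trans_le hmp) hpq hqs
    · have hqm : q = m := by simp only [q, max_eq_left hsm, min_eq_right hmM]
      rw [le_antisymm hpq (hqm ▸ hmp)]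
  · rcases le_total s M with hsM | hMs
    · have hsq : s ≤ q := le_min hsM (le_max_right _ _)
      exact div_add_mul_le_div_add_mul_of_sqrt_le hB (hm.trans_le hq.1) hqp hsq
    · have hqM : q = M := min_eq_left (hMs.trans (le_max_right _ _))
      rw [le_antisymm (hqM ▸ hpM) hqp]

end InverseLinear

lemma Vcount_eq_div_add_mul_add {ι : Type*} [Fintype ι] (a b : ι → ℕ) (ε₁ ε₂ x : ℝ) :
    Vcount a b ε₁ ε₂ x =
      (gammaMoment a b 2 2 - gammaMoment a b 1 2 - gammaMoment a b 2 1 + gammaMoment a b 1 1) / x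
        + gammaMoment a b 1 1 / (ε₁ * ε₂) * x
        + (gammaMoment a b 2 1 / ε₂ + gammaMoment a b 1 2 / ε₁ - gammaMoment a b 2 2
          - (1 / ε₁ + 1 / ε₂) * gammaMoment a b 1 1) := by
  unfold Vcount
  ring

/-- **Optimal centralized UBS parameter for COUNT.**  Assuming `γ_{1,1} > 0`, the rate
`p* = min {1, max {ε₁, ε₂, √(ε₁ε₂ (γ₂₂ − γ₁₂ − γ₂₁ + γ₁₁) / γ₁₁)}}` lies in
`[max ε₁ ε₂, 1]` and minimizes the count-estimator variance over all admissible
universe sampling rates. -/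
theorem optimal_centralized_count_rate
    {ι : Type*} [Fintype ι] (a b : ι → ℕ)
    (ε₁ ε₂ : ℝ) (hε₁0 : 0 < ε₁) (hε₁1 : ε₁ ≤ 1) (hε₂0 : 0 < ε₂) (hε₂1 : ε₂ ≤ 1)
    (hγ : 0 < gammaMoment a b 1 1)
    (pstar : ℝ)
    (hpstar : pstar = min 1 (max ε₁ (max ε₂
      (Real.sqrt (ε₁ * ε₂ * (gammaMoment a b 2 2 - gammaMoment a b 1 2
        - gammaMoment a b 2 1 + gammaMoment a b 1 1) / gammaMoment a b 1 1))))) :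
    pstar ∈ Set.Icc (max ε₁ ε₂) 1 ∧
      ∀ p ∈ Set.Icc (max ε₁ ε₂) 1, Vcount a b ε₁ ε₂ pstar ≤ Vcount a b ε₁ ε₂ p := by
  set A := gammaMoment a b 2 2 - gammaMoment a b 1 2 - gammaMoment a b 2 1
    + gammaMoment a b 1 1
  set B := gammaMoment a b 1 1 / (ε₁ * ε₂)
  have hB : 0 < B := div_pos hγ (mul_pos hε₁0 hε₂0)
  have hpstar' : pstar = min 1 (max (max ε₁ ε₂) √(A / B)) := by
    rw [hpstar, max_assoc]
    congr 4
    rw [div_div_eq_mul_div]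
    ring
  have hmin := isMinOn_div_add_mul_clamp_sqrt (A := A) hB (lt_max_of_lt_left hε₁0)
    (max_le hε₁1 hε₂1)
  rw [← hpstar'] at hmin
  refine ⟨hpstar' ▸ min_max_mem_Icc _ (max_le hε₁1 hε₂1), fun p hp => ?_⟩
  rw [Vcount_eq_div_add_mul_add, Vcount_eq_div_add_mul_add]
  exact add_le_add_left (isMinOn_iff.mp hmin p hp) _
end

section
/- (Lemma: worst-case frequency vector for COUNT in the decentralized setting.) Fix a : ι → ℕ with ι finite and nonempty, ε₁, ε₂ ∈ (0,1], a real n_b > 0, and p with max(ε₁, ε₂) ≤ p ≤ 1. Let a_* = max_{v∈ι} a_v. Then over all real vectors b : ι → ℝ with b_v ≥ 0 for all v and Σ_v b_v = n_b, the quantity V_count(p; a, b) = (1/p − 1)·Σ_v a_v² b_v² + (1/ε₂ − 1/p)·Σ_v a_v² b_v + (1/ε₁ − 1/p)·Σ_v a_v b_v² + (p/(ε₁ε₂) − 1/ε₁ − 1/ε₂ + 1/p)·Σ_v a_v b_v attains its maximum value, equal to (1/p − 1)·a_*²·n_b² + (1/ε₂ − 1/p)·a_*²·n_b + (1/ε₁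 − 1/p)·a_*·n_b² + (p/(ε₁ε₂) − 1/ε₁ − 1/ε₂ + 1/p)·a_*·n_b, at the vector concentrating all mass on a key v_* with a_{v_*} = a_* (i.e., b_{v_*} = n_b and b_v = 0 for v ≠ v_*). -/
open Finset

/-- Variance of the UBS count estimator with universe rate `p` and uniform rates
`ε₁ / p`, `ε₂ / p`, viewed as a function of a real-valued frequency vector `b` of the
second table (the first table has frequency vector `a`). -/
noncomputable def VcountR {ι : Type*} [Fintype ι] (a : ι → ℕ) (b : ι → ℝ) (ε₁ ε₂ p : ℝ) : ℝ :=
  (1 / p - 1) * (∑ v, (a v : ℝ) ^ 2 * (b v) ^ 2)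
    + (1 / ε₂ - 1 / p) * (∑ v, (a v : ℝ) ^ 2 * b v)
    + (1 / ε₁ - 1 / p) * (∑ v, (a v : ℝ) * (b v) ^ 2)
    + (p / (ε₁ * ε₂) - 1 / ε₁ - 1 / ε₂ + 1 / p) * (∑ v, (a v : ℝ) * b v)

/-!
Once `max ε₁ ε₂ ≤ p ≤ 1` every coefficient of `VcountR` is nonnegative, so
`VcountR a b = ∑ v, b v * s v` with a slope `s v` increasing in both `a v` and `b v`. Bounding `a v ≤ a_*` and `b v ≤ n_b` bounds every slope by the slope `s_*`
of the concentrated vector, and then `VcountR a b ≤ n_b * s_*`, the concentrated value.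
-/

lemma count_cross_coeff_eq {ε₁ ε₂ p : ℝ} (h₁ : ε₁ ≠ 0) (h₂ : ε₂ ≠ 0) (hp : p ≠ 0) :
    p / (ε₁ * ε₂) - 1 / ε₁ - 1 / ε₂ + 1 / p = (p - ε₁) * (p - ε₂) / (ε₁ * ε₂ * p) := by
  field_simp
  ring

lemma count_cross_coeff_nonneg {ε₁ ε₂ p : ℝ} (h₁ : 0 < ε₁) (h₂ : 0 < ε₂)
    (h₁p : ε₁ ≤ p) (h₂p : ε₂ ≤ p) :
    0 ≤ p / (ε₁ * ε₂) - 1 / ε₁ - 1 / ε₂ + 1 / p := by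
  rw [count_cross_coeff_eq h₁.ne' h₂.ne' (h₁.trans_le h₁p).ne']
  exact div_nonneg (mul_nonneg (sub_nonneg.mpr h₁p) (sub_nonneg.mpr h₂p))
    (mul_pos (mul_pos h₁ h₂) (h₁.trans_le h₁p)).le

section

variable {ι : Type*} [Fintype ι]

lemma VcountR_eq_sum_mul_slope (a : ι → ℕ) (b : ι → ℝ) (ε₁ ε₂ p : ℝ) :
    VcountR a b ε₁ ε₂ p =
      ∑ v, b v * ((1 / p - 1) * (a v : ℝ) ^ 2 * b v + (1 / ε₂ - 1 / p) * (a v : ℝ) ^ 2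
        + (1 / ε₁ - 1 / p) * (a v : ℝ) * b v
        + (p / (ε₁ * ε₂) - 1 / ε₁ - 1 / ε₂ + 1 / p) * (a v : ℝ)) := by
  simp only [VcountR, mul_sum, ← sum_add_distrib]
  exact sum_congr rfl fun v _ => by ring

lemma VcountR_le_of_le {a : ι → ℕ} {M : ℕ} (ha : ∀ v, a v ≤ M) {b : ι → ℝ}
    (hb : ∀ v, 0 ≤ b v) {ε₁ ε₂ p : ℝ} (h₁ : 0 < ε₁) (h₂ : 0 < ε₂)
    (h₁p : ε₁ ≤ p) (h₂p : ε₂ ≤ p) (hp1 : p ≤ 1) :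
    VcountR a b ε₁ ε₂ p ≤
      (1 / p - 1) * (M : ℝ) ^ 2 * (∑ v, b v) ^ 2
        + (1 / ε₂ - 1 / p) * (M : ℝ) ^ 2 * (∑ v, b v)
        + (1 / ε₁ - 1 / p) * (M : ℝ) * (∑ v, b v) ^ 2
        + (p / (ε₁ * ε₂) - 1 / ε₁ - 1 / ε₂ + 1 / p) * (M : ℝ) * (∑ v, b v) := by
  have hA : 0 ≤ 1 / p - 1 := sub_nonneg.mpr (one_le_one_div (h₁.trans_le h₁p) hp1)
  have hB : 0 ≤ 1 / ε₂ - 1 / p := sub_nonneg.mpr (one_div_le_one_div_of_le h₂ h₂p)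
  have hC : 0 ≤ 1 / ε₁ - 1 / p := sub_nonneg.mpr (one_div_le_one_div_of_le h₁ h₁p)
  have hD := count_cross_coeff_nonneg h₁ h₂ h₁p h₂p
  set n := ∑ v, b v
  have hbn : ∀ v, b v ≤ n := fun v => single_le_sum (fun i _ => hb i) (mem_univ v)
  calc VcountR a b ε₁ ε₂ p
      ≤ ∑ v, b v * ((1 / p - 1) * (M : ℝ) ^ 2 * n + (1 / ε₂ - 1 / p) * (M : ℝ) ^ 2
          + (1 / ε₁ - 1 / p) * (M : ℝ) * n
          + (p / (ε₁ * ε₂) - 1 / ε₁ - 1 / ε₂ + 1 / p) * (M : ℝ)) := by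
        rw [VcountR_eq_sum_mul_slope]
        gcongr with v
        all_goals first | exact hb v | exact ha v | exact hbn v
    _ = _ := by rw [← sum_mul]; ring

lemma VcountR_single [DecidableEq ι] (a : ι → ℕ) (w : ι) (n ε₁ ε₂ p : ℝ) :
    VcountR a (fun v => if v = w then n else 0) ε₁ ε₂ p =
      (1 / p - 1) * (a w : ℝ) ^ 2 * n ^ 2 + (1 / ε₂ - 1 / p) * (a w : ℝ) ^ 2 * n
        + (1 / ε₁ - 1 / p) * (a w : ℝ) * n ^ 2
        + (p / (ε₁ * ε₂) - 1 / ε₁ - 1 / ε₂ + 1 / p) * (a w : ℝ) * n := by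
  simp [VcountR, mul_assoc]

end

theorem worst_case_frequency_vector_for_count_general
    {ι : Type*} [Fintype ι] [DecidableEq ι] (a : ι → ℕ)
    (ε₁ ε₂ : ℝ) (hε₁0 : 0 < ε₁) (hε₂0 : 0 < ε₂)
    (nb : ℝ)
    (p : ℝ) (hplb : max ε₁ ε₂ ≤ p) (hp1 : p ≤ 1)
    (astar : ℕ) (hastar : astar = univ.sup a) :
    (∀ b : ι → ℝ, (∀ v, 0 ≤ b v) → ∑ v, b v = nb →
        VcountR a b ε₁ ε₂ p ≤
          (1 / p - 1) * (astar : ℝ) ^ 2 * nb ^ 2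
            + (1 / ε₂ - 1 / p) * (astar : ℝ) ^ 2 * nb
            + (1 / ε₁ - 1 / p) * (astar : ℝ) * nb ^ 2
            + (p / (ε₁ * ε₂) - 1 / ε₁ - 1 / ε₂ + 1 / p) * (astar : ℝ) * nb) ∧
    (∀ vstar : ι, a vstar = astar →
        VcountR a (fun v => if v = vstar then nb else 0) ε₁ ε₂ p =
          (1 / p - 1) * (astar : ℝ) ^ 2 * nb ^ 2
            + (1 / ε₂ - 1 / p) * (astar : ℝ) ^ 2 * nb
            + (1 / ε₁ - 1 / p) * (astar : ℝ) * nb ^ 2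
            + (p / (ε₁ * ε₂) - 1 / ε₁ - 1 / ε₂ + 1 / p) * (astar : ℝ) * nb) := by
  obtain ⟨h₁p, h₂p⟩ := max_le_iff.mp hplb
  refine ⟨fun b hb hsum => ?_, fun vstar hvstar => ?_⟩
  · subst hsum hastar
    exact VcountR_le_of_le (fun v => le_sup (mem_univ v)) hb hε₁0 hε₂0 h₁p h₂p hp1
  · rw [VcountR_single, hvstar]

/-- **Worst-case frequency vector for COUNT in the decentralized setting.**
Over all nonnegative real frequency vectors `b` with total mass `n_b`, the count-estimator
variance is maximized (with maximum value as displayed) by concentrating all mass on a key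
`v⋆` whose frequency in the first table is maximal, `a v⋆ = a_* = max_v a_v`. -/
theorem worst_case_frequency_vector_for_count
    {ι : Type*} [Fintype ι] [Nonempty ι] [DecidableEq ι] (a : ι → ℕ)
    (ε₁ ε₂ : ℝ) (hε₁0 : 0 < ε₁) (hε₁1 : ε₁ ≤ 1) (hε₂0 : 0 < ε₂) (hε₂1 : ε₂ ≤ 1)
    (nb : ℝ) (hnb : 0 < nb)
    (p : ℝ) (hplb : max ε₁ ε₂ ≤ p) (hp1 : p ≤ 1)
    (astar : ℕ) (hastar : astar = univ.sup a) :
    (∀ b : ι → ℝ, (∀ v, 0 ≤ b v) → ∑ v, b v = nb →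
        VcountR a b ε₁ ε₂ p ≤
          (1 / p - 1) * (astar : ℝ) ^ 2 * nb ^ 2
            + (1 / ε₂ - 1 / p) * (astar : ℝ) ^ 2 * nb
            + (1 / ε₁ - 1 / p) * (astar : ℝ) * nb ^ 2
            + (p / (ε₁ * ε₂) - 1 / ε₁ - 1 / ε₂ + 1 / p) * (astar : ℝ) * nb) ∧
    (∀ vstar : ι, a vstar = astar →
        VcountR a (fun v => if v = vstar then nb else 0) ε₁ ε₂ p =
          (1 / p - 1) * (astar : ℝ) ^ 2 * nb ^ 2
            + (1 / ε₂ - 1 / p) * (astar : ℝ) ^ 2 * nb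
            + (1 / ε₁ - 1 / p) * (astar : ℝ) * nb ^ 2
            + (p / (ε₁ * ε₂) - 1 / ε₁ - 1 / ε₂ + 1 / p) * (astar : ℝ) * nb) :=
  worst_case_frequency_vector_for_count_general a ε₁ ε₂ hε₁0 hε₂0 nb p hplb hp1 astar hastar
end

section
/- (Theorem: optimal decentralized UBS parameter for COUNT with known maximum frequencies.) Let ι be a finite nonempty index type, F_a, F_b positive naturals, and ε₁, ε₂ ∈ (0,1]. For p ∈ (0,1] define the worst-case variance W(p) = |ι|·( (1/p − 1)·F_a²F_b² + (1/ε₂ − 1/p)·F_a²F_b + (1/ε₁ − 1/p)·F_aF_b² + (p/(ε₁ε₂) − 1/ε₁ − 1/ε₂ + 1/p)·F_aF_b ). Then: (i) for every p with max(ε₁,ε₂) ≤ p ≤ 1 and every pair of frequency vectors a, b : ι → ℕ with a_v ≤ F_a and b_v ≤ F_b for all v, V_count(p; a, b) ≤ W(p); and (ii) the point p† = min{ 1, max{ ε₁, ε₂, √( ε₁ε₂·(F_aF_b − F_a − F_b + 1) ) } } satisfies W(p†) ≤ W(p) for all p ∈ [max(ε₁,ε₂), 1]. -/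
/-!
Each coefficient of `VcountN` is nonnegative once `max ε₁ ε₂ ≤ p ≤ 1` (the last one equals
`(p - ε₁)(p - ε₂) / (p ε₁ ε₂)`), so the variance is monotone in the frequencies and is maximal
when all of them sit at `F_a`, `F_b`, which is `W(p)`. Collecting powers of `p`,
`W(p) = |ι| (D (s² / p + p) + E)` with `D = F_a F_b / (ε₁ ε₂)` and
`s² = ε₁ ε₂ (F_a - 1)(F_b - 1)`; the map `p ↦ s² / p + p` decreases up to `s` and increases
after it, so its minimum over an interval is attained at `s` clamped to that interval.
-/

/-- Variance of the UBS count estimator with universe rate `p` and uniform rates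
`ε₁ / p`, `ε₂ / p`, as a function of the two frequency vectors `a`, `b`. -/
noncomputable def VcountN {ι : Type*} [Fintype ι] (a b : ι → ℕ) (ε₁ ε₂ p : ℝ) : ℝ :=
  (1 / p - 1) * (∑ v, (a v : ℝ) ^ 2 * (b v : ℝ) ^ 2)
    + (1 / ε₂ - 1 / p) * (∑ v, (a v : ℝ) ^ 2 * (b v : ℝ))
    + (1 / ε₁ - 1 / p) * (∑ v, (a v : ℝ) * (b v : ℝ) ^ 2)
    + (p / (ε₁ * ε₂) - 1 / ε₁ - 1 / ε₂ + 1 / p) * (∑ v, (a v : ℝ) * (b v : ℝ))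

/-- Worst-case count-estimator variance when all key frequencies are at their maxima
`F_a` and `F_b`. -/
noncomputable def Wworst (ι : Type*) [Fintype ι] (Fa Fb : ℕ) (ε₁ ε₂ p : ℝ) : ℝ :=
  (Fintype.card ι : ℝ) *
    ((1 / p - 1) * (Fa : ℝ) ^ 2 * (Fb : ℝ) ^ 2
      + (1 / ε₂ - 1 / p) * (Fa : ℝ) ^ 2 * (Fb : ℝ)
      + (1 / ε₁ - 1 / p) * (Fa : ℝ) * (Fb : ℝ) ^ 2
      + (p / (ε₁ * ε₂) - 1 / ε₁ - 1 / ε₂ + 1 / p) * (Fa : ℝ) * (Fb : ℝ))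

lemma div_mul_sub_one_div_sub_one_div_add_one_div_nonneg {ε₁ ε₂ p : ℝ} (hε₁ : 0 < ε₁)
    (hε₂ : 0 < ε₂) (hε₁p : ε₁ ≤ p) (hε₂p : ε₂ ≤ p) :
    0 ≤ p / (ε₁ * ε₂) - 1 / ε₁ - 1 / ε₂ + 1 / p := by
  have hp : 0 < p := hε₁.trans_le hε₁p
  have h : p / (ε₁ * ε₂) - 1 / ε₁ - 1 / ε₂ + 1 / p = (p - ε₁) * (p - ε₂) / (p * ε₁ * ε₂) := by
    field_simp
    ring
  rw [h]
  exact div_nonneg (mul_nonneg (sub_nonneg.2 hε₁p) (sub_nonneg.2 hε₂p)) (by positivity)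

lemma VcountN_mono {ι : Type*} [Fintype ι] {a a' b b' : ι → ℕ} {ε₁ ε₂ p : ℝ}
    (hε₁ : 0 < ε₁) (hε₂ : 0 < ε₂) (hε₁p : ε₁ ≤ p) (hε₂p : ε₂ ≤ p) (hp1 : p ≤ 1)
    (ha : a ≤ a') (hb : b ≤ b') :
    VcountN a b ε₁ ε₂ p ≤ VcountN a' b' ε₁ ε₂ p := by
  have hp : 0 < p := hε₁.trans_le hε₁p
  have hc₀ : 0 ≤ 1 / p - 1 := sub_nonneg.2 (one_le_one_div hp hp1)
  have hc₁ : 0 ≤ 1 / ε₁ - 1 / p := sub_nonneg.2 (one_div_le_one_div_of_le hε₁ hε₁p)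
  have hc₂ : 0 ≤ 1 / ε₂ - 1 / p := sub_nonneg.2 (one_div_le_one_div_of_le hε₂ hε₂p)
  have hc₃ := div_mul_sub_one_div_sub_one_div_add_one_div_nonneg hε₁ hε₂ hε₁p hε₂p
  have ha' (v : ι) : (a v : ℝ) ≤ a' v := by exact_mod_cast ha v
  have hb' (v : ι) : (b v : ℝ) ≤ b' v := by exact_mod_cast hb v
  unfold VcountN
  gcongr <;> apply_rules

lemma VcountN_const {ι : Type*} [Fintype ι] (Fa Fb : ℕ) (ε₁ ε₂ p : ℝ) :
    VcountN (fun _ : ι => Fa) (fun _ => Fb) ε₁ ε₂ p = Wworst ι Fa Fb ε₁ ε₂ p := by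
  simp only [VcountN, Wworst, Finset.sum_const, Finset.card_univ, nsmul_eq_mul]
  ring

lemma Wworst_eq {ι : Type*} [Fintype ι] {Fa Fb : ℕ} {ε₁ ε₂ p s : ℝ} (hε₁ : ε₁ ≠ 0)
    (hε₂ : ε₂ ≠ 0) (hp : p ≠ 0)
    (hs : s ^ 2 = ε₁ * ε₂ * ((Fa : ℝ) * Fb - Fa - Fb + 1)) :
    Wworst ι Fa Fb ε₁ ε₂ p = Fintype.card ι *
      (Fa * Fb / (ε₁ * ε₂) * (s ^ 2 / p + p)
        + Fa * Fb * (Fa / ε₂ + Fb / ε₁ - Fa * Fb - 1 / ε₁ - 1 / ε₂)) := by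
  rw [hs, Wworst]
  field_simp
  ring

lemma sq_div_add_le_sq_div_add {s p q : ℝ} (hp : 0 < p) (hq : 0 < q)
    (h : 0 ≤ (p - q) * (p * q - s ^ 2)) :
    s ^ 2 / q + q ≤ s ^ 2 / p + p := by
  have hdiff : s ^ 2 / p + p - (s ^ 2 / q + q) = (p - q) * (p * q - s ^ 2) / (p * q) := by
    field_simp
    ring
  have := div_nonneg h (mul_pos hp hq).le
  linarith

lemma sq_div_add_min_max_le {s lo hi p : ℝ} (hs : 0 ≤ s) (hlo : 0 < lo)
    (hp : p ∈ Set.Icc lo hi) :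
    s ^ 2 / min hi (max lo s) + min hi (max lo s) ≤ s ^ 2 / p + p := by
  obtain ⟨hlop, hphi⟩ := hp
  have hq : 0 < min hi (max lo s) :=
    lt_min (hlo.trans_le (hlop.trans hphi)) (hlo.trans_le (le_max_left _ _))
  refine sq_div_add_le_sq_div_add (hlo.trans_le hlop) hq ?_
  rcases le_total s lo with hslo | hlos
  · rw [max_eq_left hslo, min_eq_right (hlop.trans hphi)]
    exact mul_nonneg (by linarith) (by nlinarith)
  rcases le_total s hi with hshi | hhis
  · rw [max_eq_right hlos, min_eq_right hshi]
    nlinarith [sq_nonneg (p - s)]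
  · rw [max_eq_right hlos, min_eq_left hhis]
    exact mul_nonneg_of_nonpos_of_nonpos (by linarith) (by nlinarith)

theorem optimal_decentralized_count_rate_general
    {ι : Type*} [Fintype ι]
    (Fa Fb : ℕ) (hFa : 0 < Fa) (hFb : 0 < Fb)
    (ε₁ ε₂ : ℝ) (hε₁0 : 0 < ε₁) (hε₂0 : 0 < ε₂)
    (pdag : ℝ)
    (hpdag : pdag = min 1 (max ε₁ (max ε₂
      (Real.sqrt (ε₁ * ε₂ * ((Fa : ℝ) * (Fb : ℝ) - (Fa : ℝ) - (Fb : ℝ) + 1)))))) :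
    (∀ p ∈ Set.Icc (max ε₁ ε₂) 1, ∀ a b : ι → ℕ,
        (∀ v, a v ≤ Fa) → (∀ v, b v ≤ Fb) →
          VcountN a b ε₁ ε₂ p ≤ Wworst ι Fa Fb ε₁ ε₂ p) ∧
    (∀ p ∈ Set.Icc (max ε₁ ε₂) 1,
        Wworst ι Fa Fb ε₁ ε₂ pdag ≤ Wworst ι Fa Fb ε₁ ε₂ p) := by
  refine ⟨fun p ⟨hlo, hhi⟩ a b ha hb => ?_, fun p hp => ?_⟩
  · rw [← VcountN_const]
    exact VcountN_mono hε₁0 hε₂0 (le_of_max_le_left hlo) (le_of_max_le_right hlo) hhi ha hb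
  have hlo : 0 < max ε₁ ε₂ := lt_max_of_lt_left hε₁0
  have hA : (1 : ℝ) ≤ Fa := by exact_mod_cast hFa
  have hB : (1 : ℝ) ≤ Fb := by exact_mod_cast hFb
  set s := Real.sqrt (ε₁ * ε₂ * ((Fa : ℝ) * Fb - Fa - Fb + 1))
  have hs : s ^ 2 = ε₁ * ε₂ * ((Fa : ℝ) * Fb - Fa - Fb + 1) := Real.sq_sqrt (by
    nlinarith [mul_pos hε₁0 hε₂0, mul_nonneg (sub_nonneg.2 hA) (sub_nonneg.2 hB)])
  rw [← max_assoc] at hpdag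
  have hpdag0 : 0 < pdag := hpdag ▸ lt_min one_pos (lt_max_of_lt_left hlo)
  rw [Wworst_eq hε₁0.ne' hε₂0.ne' hpdag0.ne' hs,
    Wworst_eq hε₁0.ne' hε₂0.ne' (hlo.trans_le hp.1).ne' hs]
  gcongr _ * (_ * ?_ + _)
  exact hpdag ▸ sq_div_add_min_max_le (Real.sqrt_nonneg _) hlo hp

/-- **Optimal decentralized UBS parameter for COUNT with known maximum frequencies.**
(i) `W(p)` upper-bounds the count variance for all frequency vectors bounded by `F_a`, `F_b`;
(ii) `p† = min {1, max {ε₁, ε₂, √(ε₁ε₂ (F_aF_b − F_a − F_b + 1))}}` minimizes `W`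
over `[max ε₁ ε₂, 1]`. -/
theorem optimal_decentralized_count_rate
    {ι : Type*} [Fintype ι] [Nonempty ι]
    (Fa Fb : ℕ) (hFa : 0 < Fa) (hFb : 0 < Fb)
    (ε₁ ε₂ : ℝ) (hε₁0 : 0 < ε₁) (hε₁1 : ε₁ ≤ 1) (hε₂0 : 0 < ε₂) (hε₂1 : ε₂ ≤ 1)
    (pdag : ℝ)
    (hpdag : pdag = min 1 (max ε₁ (max ε₂
      (Real.sqrt (ε₁ * ε₂ * ((Fa : ℝ) * (Fb : ℝ) - (Fa : ℝ) - (Fb : ℝ) + 1)))))) :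
    (∀ p ∈ Set.Icc (max ε₁ ε₂) 1, ∀ a b : ι → ℕ,
        (∀ v, a v ≤ Fa) → (∀ v, b v ≤ Fb) →
          VcountN a b ε₁ ε₂ p ≤ Wworst ι Fa Fb ε₁ ε₂ p) ∧
    (∀ p ∈ Set.Icc (max ε₁ ε₂) 1,
        Wworst ι Fa Fb ε₁ ε₂ pdag ≤ Wworst ι Fa Fb ε₁ ε₂ p) :=
  optimal_decentralized_count_rate_general Fa Fb hFa hFb ε₁ ε₂ hε₁0 hε₂0 pdag hpdag
end

section
/- (Lemma: equal universe rates are optimal for SUM.) Fix p₁ ∈ (0,1], q₁ ∈ (0,1], and an effective sampling rate ε₂ ∈ (0,1] with ε₂ ≤ p₁. Then for every p₂ with ε₂ ≤ p₂ ≤ 1 (and corresponding uniform rate q₂ = ε₂/p₂), W_sum(p₁, q₁, p₂, ε₂/p₂) ≥ W_sum(p₁, q₁, p₁, ε₂/p₁); that is, the sum-estimator variance is minimized over p₂ ∈ [ε₂, 1] at p₂ = p₁. -/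
/-- Mean `μ_v` of the weights attached to the tuples of the first table with join key `v`
(`0` when there are no such tuples). -/
noncomputable def wMean {ι : Type*} (a : ι → ℕ) (w : (v : ι) → Fin (a v) → ℝ) (v : ι) : ℝ :=
  (∑ i, w v i) / (a v)

/-- Population variance `σ_v²` of the weights attached to the tuples of the first table with
join key `v` (`0` when there are no such tuples). -/
noncomputable def wVar {ι : Type*} (a : ι → ℕ) (w : (v : ι) → Fin (a v) → ℝ) (v : ι) : ℝ :=
  (∑ i, (w v i - wMean a w v) ^ 2) / (a v)

/-- `β₁ = ∑ a_v² μ_v² b_v`. -/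
noncomputable def beta1 {ι : Type*} [Fintype ι] (a b : ι → ℕ) (w : (v : ι) → Fin (a v) → ℝ) : ℝ :=
  ∑ v, (a v : ℝ) ^ 2 * (wMean a w v) ^ 2 * (b v : ℝ)

/-- `β₂ = ∑ a_v (μ_v² + σ_v²) b_v²`. -/
noncomputable def beta2 {ι : Type*} [Fintype ι] (a b : ι → ℕ) (w : (v : ι) → Fin (a v) → ℝ) : ℝ :=
  ∑ v, (a v : ℝ) * ((wMean a w v) ^ 2 + wVar a w v) * (b v : ℝ) ^ 2

/-- `β₃ = ∑ a_v (μ_v² + σ_v²) b_v`. -/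
noncomputable def beta3 {ι : Type*} [Fintype ι] (a b : ι → ℕ) (w : (v : ι) → Fin (a v) → ℝ) : ℝ :=
  ∑ v, (a v : ℝ) * ((wMean a w v) ^ 2 + wVar a w v) * (b v : ℝ)

/-- `β₄ = ∑ a_v² μ_v² b_v²`. -/
noncomputable def beta4 {ι : Type*} [Fintype ι] (a b : ι → ℕ) (w : (v : ι) → Fin (a v) → ℝ) : ℝ :=
  ∑ v, (a v : ℝ) ^ 2 * (wMean a w v) ^ 2 * (b v : ℝ) ^ 2

/-- Variance of the UBS sum estimator when the two tables are sampled with parameters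
`(p₁, q₁)` and `(p₂, q₂)` sharing the same hash; `m = min p₁ p₂`. -/
noncomputable def Wsum {ι : Type*} [Fintype ι] (a b : ι → ℕ) (w : (v : ι) → Fin (a v) → ℝ)
    (p₁ q₁ p₂ q₂ : ℝ) : ℝ :=
  ((1 - q₂) / (min p₁ p₂ * q₂)) * beta1 a b w
    + ((1 - q₁) / (min p₁ p₂ * q₁)) * beta2 a b w
    + ((1 - q₁) * (1 - q₂) / (min p₁ p₂ * q₁ * q₂)) * beta3 a b w
    + ((1 - min p₁ p₂) / min p₁ p₂) * beta4 a b w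

/-!
With `q₂ = ε₂ / p₂` and `m = min p₁ p₂`, the variance takes the form
`(p₂ / m) · A + B / m - β₄` with `A = (β₁ + r β₃) / ε₂`, `B = (β₄ - β₁) + r (β₂ - β₃)` and
`r = (1 - q₁) / q₁`. Both `A` and `B` are nonnegative because the `b v` are natural numbers,
so `b v ≤ b v ²`. Since `m ≤ p₂` and `m ≤ p₁`, the value is at least `A + B / p₁ - β₄`,
which is the value at `p₂ = p₁`.
-/

theorem wVar_nonneg {ι : Type*} (a : ι → ℕ) (w : (v : ι) → Fin (a v) → ℝ) (v : ι) :
    0 ≤ wVar a w v := by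
  unfold wVar
  positivity

theorem natCast_le_natCast_sq (n : ℕ) : (n : ℝ) ≤ (n : ℝ) ^ 2 := by
  exact_mod_cast Nat.le_self_pow two_ne_zero n

section Betas

variable {ι : Type*} [Fintype ι] (a b : ι → ℕ) (w : (v : ι) → Fin (a v) → ℝ)

theorem beta1_nonneg : 0 ≤ beta1 a b w := by
  unfold beta1
  positivity

theorem beta3_nonneg : 0 ≤ beta3 a b w := by
  unfold beta3
  refine Finset.sum_nonneg fun v _ => ?_
  have := wVar_nonneg a w v
  positivity

theorem beta1_le_beta4 : beta1 a b w ≤ beta4 a b w := by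
  unfold beta1 beta4
  gcongr with v
  exact natCast_le_natCast_sq (b v)

theorem beta3_le_beta2 : beta3 a b w ≤ beta2 a b w := by
  unfold beta2 beta3
  gcongr with v
  · have := wVar_nonneg a w v
    positivity
  · exact natCast_le_natCast_sq (b v)

theorem Wsum_div_eq {p₁ q₁ p₂ ε : ℝ} (hm : min p₁ p₂ ≠ 0) (hp₂ : p₂ ≠ 0) (hε : ε ≠ 0)
    (hq₁ : q₁ ≠ 0) :
    Wsum a b w p₁ q₁ p₂ (ε / p₂) =
      p₂ / min p₁ p₂ * ((beta1 a b w + (1 - q₁) / q₁ * beta3 a b w) / ε)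
        + (beta4 a b w - beta1 a b w + (1 - q₁) / q₁ * (beta2 a b w - beta3 a b w))
          / min p₁ p₂
        - beta4 a b w := by
  unfold Wsum
  field_simp
  ring

end Betas

theorem equal_universe_rate_optimal_for_sum_general
    {ι : Type*} [Fintype ι] (a b : ι → ℕ) (w : (v : ι) → Fin (a v) → ℝ)
    (p₁ q₁ ε₂ : ℝ) (hp₁0 : 0 < p₁) (hq₁0 : 0 < q₁) (hq₁1 : q₁ ≤ 1)
    (hε₂0 : 0 < ε₂) :
    ∀ p₂, ε₂ ≤ p₂ → p₂ ≤ 1 →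
      Wsum a b w p₁ q₁ p₁ (ε₂ / p₁) ≤ Wsum a b w p₁ q₁ p₂ (ε₂ / p₂) := by
  intro p₂ hεp₂ _
  have hp₂0 : 0 < p₂ := hε₂0.trans_le hεp₂
  have hm : 0 < min p₁ p₂ := lt_min hp₁0 hp₂0
  have hr : 0 ≤ (1 - q₁) / q₁ := div_nonneg (sub_nonneg.mpr hq₁1) hq₁0.le
  rw [Wsum_div_eq a b w hm.ne' hp₂0.ne' hε₂0.ne' hq₁0.ne',
    Wsum_div_eq a b w (by rw [min_self]; exact hp₁0.ne') hp₁0.ne' hε₂0.ne' hq₁0.ne', min_self,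
    div_self hp₁0.ne', one_mul]
  have hA : 0 ≤ (beta1 a b w + (1 - q₁) / q₁ * beta3 a b w) / ε₂ := by
    have := beta1_nonneg a b w
    have := beta3_nonneg a b w
    positivity
  have hB : 0 ≤ beta4 a b w - beta1 a b w + (1 - q₁) / q₁ * (beta2 a b w - beta3 a b w) := by
    have := sub_nonneg.mpr (beta1_le_beta4 a b w)
    have := sub_nonneg.mpr (beta3_le_beta2 a b w)
    positivity
  have hp₂m : 1 ≤ p₂ / min p₁ p₂ := (one_le_div hm).mpr (min_le_right _ _)
  gcongr
  · exact le_mul_of_one_le_left hA hp₂m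
  · exact min_le_left _ _

/-- **Equal universe rates are optimal for SUM.**  Fixing `(p₁, q₁)` for the first table and
the effective rate `ε₂ ≤ p₁` for the second, the sum-estimator variance over `p₂ ∈ [ε₂, 1]`
(with uniform rate `q₂ = ε₂ / p₂`) is minimized at `p₂ = p₁`. -/
theorem equal_universe_rate_optimal_for_sum
    {ι : Type*} [Fintype ι] (a b : ι → ℕ) (w : (v : ι) → Fin (a v) → ℝ)
    (p₁ q₁ ε₂ : ℝ) (hp₁0 : 0 < p₁) (hp₁1 : p₁ ≤ 1) (hq₁0 : 0 < q₁) (hq₁1 : q₁ ≤ 1)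
    (hε₂0 : 0 < ε₂) (hε₂1 : ε₂ ≤ 1) (hle : ε₂ ≤ p₁) :
    ∀ p₂, ε₂ ≤ p₂ → p₂ ≤ 1 →
      Wsum a b w p₁ q₁ p₁ (ε₂ / p₁) ≤ Wsum a b w p₁ q₁ p₂ (ε₂ / p₂) :=
  equal_universe_rate_optimal_for_sum_general a b w p₁ q₁ ε₂ hp₁0 hq₁0 hq₁1 hε₂0
end

section
/- (Theorem: optimal centralized UBS parameters for SUM.) Assume β₃ > 0. Let p* = min{ 1, max{ ε₁, ε₂, √( ε₁ε₂·(β₄ + β₃ − β₁ − β₂) / β₃ ) } }, where √x denotes the real square root (equal to 0 when its argument is negative). Then p* ∈ [max(ε₁,ε₂), 1] and for every p with max(ε₁, ε₂) ≤ p ≤ 1, V_sum(p*) ≤ V_sum(p); i.e., p* minimizes the sum-estimator variance over all admissible universe sampling rates. -/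
/-- Variance of the UBS sum estimator in the centralized setting as a function of the
common universe sampling rate `p` (uniform rates `ε₁ / p` and `ε₂ / p`). -/
noncomputable def Vsum {ι : Type*} [Fintype ι] (a b : ι → ℕ) (w : (v : ι) → Fin (a v) → ℝ)
    (ε₁ ε₂ p : ℝ) : ℝ :=
  (1 / ε₂ - 1 / p) * beta1 a b w
    + (1 / ε₁ - 1 / p) * beta2 a b w
    + (p / (ε₁ * ε₂) - 1 / ε₁ - 1 / ε₂ + 1 / p) * beta3 a b w
    + (1 / p - 1) * beta4 a b w

theorem isMinOn_Icc_min_max {α β : Type*} [LinearOrder α] [Preorder β] {f : α → β}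
    {lo hi s : α} (h_anti : AntitoneOn f (Set.Icc lo s))
    (h_mono : MonotoneOn f (Set.Icc (max lo s) hi)) :
    IsMinOn f (Set.Icc lo hi) (min hi (max lo s)) := by
  intro p ⟨hlo, hhi⟩
  rcases le_total s lo with hs | hs
  · have hlo_hi : lo ≤ hi := hlo.trans hhi
    rw [max_eq_left hs, min_eq_right hlo_hi]
    exact h_mono ⟨(max_eq_left hs).le, hlo_hi⟩ ⟨(max_eq_left hs).trans_le hlo, hhi⟩ hlo
  rw [max_eq_right hs]
  rcases le_total hi s with hs' | hs'
  · rw [min_eq_left hs']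
    exact h_anti ⟨hlo, hhi.trans hs'⟩ ⟨hlo.trans hhi, hs'⟩ hhi
  rw [min_eq_right hs']
  rcases le_total p s with hps | hps
  · exact h_anti ⟨hlo, hps⟩ ⟨hs, le_rfl⟩ hps
  · exact h_mono ⟨(max_eq_right hs).le, hs'⟩ ⟨(max_eq_right hs).trans_le hps, hhi⟩ hps

section MulAddDiv

variable {α γ : ℝ}

lemma mul_add_div_sub_mul_add_div {p q : ℝ} (hp : p ≠ 0) (hq : q ≠ 0) :
    (α * q + γ / q) - (α * p + γ / p) = (q - p) * (α * (p * q) - γ) / (p * q) := by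
  field_simp
  ring

lemma antitoneOn_mul_add_div (hα : 0 < α) :
    AntitoneOn (fun p => α * p + γ / p) (Set.Ioc 0 √(γ / α)) := by
  intro p ⟨hp, hps⟩ q ⟨hq, hqs⟩ hpq
  have hγ : α * √(γ / α) ^ 2 = γ := by
    rw [Real.sq_sqrt (Real.sqrt_pos.1 (hp.trans_le hps)).le]
    field_simp
  have hpq_le : p * q ≤ √(γ / α) ^ 2 := by nlinarith
  dsimp only
  rw [← sub_nonpos, mul_add_div_sub_mul_add_div hp.ne' hq.ne']
  apply div_nonpos_of_nonpos_of_nonneg _ (by positivity)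
  exact mul_nonpos_of_nonneg_of_nonpos (sub_nonneg.2 hpq)
    (by nlinarith [mul_le_mul_of_nonneg_left hpq_le hα.le])

lemma monotoneOn_mul_add_div (hα : 0 < α) :
    MonotoneOn (fun p => α * p + γ / p) (Set.Ici √(γ / α) ∩ Set.Ioi 0) := by
  rintro p ⟨hsp : √(γ / α) ≤ p, hp : 0 < p⟩ q ⟨hsq : √(γ / α) ≤ q, hq : 0 < q⟩ hpq
  have hγ : γ ≤ α * √(γ / α) ^ 2 := by
    rw [Real.sq_sqrt', mul_max_of_nonneg _ _ hα.le, mul_div_cancel₀ _ hα.ne']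
    exact le_max_left _ _
  have hpq_ge : √(γ / α) ^ 2 ≤ p * q := by
    have := Real.sqrt_nonneg (γ / α)
    nlinarith
  dsimp only
  rw [← sub_nonneg, mul_add_div_sub_mul_add_div hp.ne' hq.ne']
  apply div_nonneg _ (by positivity)
  exact mul_nonneg (sub_nonneg.2 hpq) (by nlinarith [mul_le_mul_of_nonneg_left hpq_ge hα.le])

theorem isMinOn_mul_add_div (hα : 0 < α) {lo hi : ℝ} (hlo : 0 < lo) :
    IsMinOn (fun p => α * p + γ / p) (Set.Icc lo hi) (min hi (max lo √(γ / α))) :=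
  isMinOn_Icc_min_max
    ((antitoneOn_mul_add_div hα).mono fun _ hp => ⟨hlo.trans_le hp.1, hp.2⟩)
    ((monotoneOn_mul_add_div hα).mono fun _ hp =>
      ⟨(le_max_right _ _).trans hp.1, hlo.trans_le ((le_max_left _ _).trans hp.1)⟩)

end MulAddDiv

lemma Vsum_eq {ι : Type*} [Fintype ι] (a b : ι → ℕ) (w : (v : ι) → Fin (a v) → ℝ)
    (ε₁ ε₂ p : ℝ) :
    Vsum a b w ε₁ ε₂ p
      = (beta1 a b w / ε₂ + beta2 a b w / ε₁ - (1 / ε₁ + 1 / ε₂) * beta3 a b w - beta4 a b w)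
        + (beta3 a b w / (ε₁ * ε₂) * p
          + (beta4 a b w + beta3 a b w - beta1 a b w - beta2 a b w) / p) := by
  unfold Vsum
  ring

/-- **Optimal centralized UBS parameter for SUM.**  Assuming `β₃ > 0`, the rate
`p* = min {1, max {ε₁, ε₂, √(ε₁ε₂ (β₄ + β₃ − β₁ − β₂) / β₃)}}` (real square root, `0` on
negative arguments) lies in `[max ε₁ ε₂, 1]` and minimizes the sum-estimator variance over
all admissible universe sampling rates. -/
theorem optimal_centralized_sum_rate
    {ι : Type*} [Fintype ι] (a b : ι → ℕ) (w : (v : ι) → Fin (a v) → ℝ)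
    (ε₁ ε₂ : ℝ) (hε₁0 : 0 < ε₁) (hε₁1 : ε₁ ≤ 1) (hε₂0 : 0 < ε₂) (hε₂1 : ε₂ ≤ 1)
    (hβ₃ : 0 < beta3 a b w)
    (pstar : ℝ)
    (hpstar : pstar = min 1 (max ε₁ (max ε₂
      (Real.sqrt (ε₁ * ε₂ * (beta4 a b w + beta3 a b w - beta1 a b w - beta2 a b w)
        / beta3 a b w))))) :
    pstar ∈ Set.Icc (max ε₁ ε₂) 1 ∧
      ∀ p ∈ Set.Icc (max ε₁ ε₂) 1, Vsum a b w ε₁ ε₂ pstar ≤ Vsum a b w ε₁ ε₂ p := by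
  set B := beta4 a b w + beta3 a b w - beta1 a b w - beta2 a b w
  have hα : 0 < beta3 a b w / (ε₁ * ε₂) := by positivity
  have hlo : 0 < max ε₁ ε₂ := lt_max_of_lt_left hε₁0
  have hp : pstar = min 1 (max (max ε₁ ε₂) √(B / (beta3 a b w / (ε₁ * ε₂)))) := by
    rw [hpstar, max_assoc, div_div_eq_mul_div, mul_comm B]
  refine ⟨hp ▸ ⟨le_min (max_le hε₁1 hε₂1) (le_max_left _ _), min_le_left _ _⟩, ?_⟩
  intro p hp_mem
  rw [Vsum_eq, Vsum_eq, hp]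
  exact (add_le_add_iff_left _).2 (isMinOn_iff.1 (isMinOn_mul_add_div hα hlo) p hp_mem)
end

section
/- (Corollary: near-optimality of the two-point rule for decentralized SUM.) With h' and h* as above, suppose p' ∈ [max(ε₁,ε₂), 1] minimizes h' over [max(ε₁,ε₂), 1] and p* ∈ [max(ε₁,ε₂), 1] minimizes h* over [max(ε₁,ε₂), 1]. Then h*(p') ≤ 2·h*(p*); i.e., choosing the universe rate that minimizes the two-point approximation increases the optimal worst-case variance by at most a factor of 2. -/
/-- `h_v(p)`: the sum-estimator variance when all of the second table's mass `n_b` is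
concentrated on the join key `v`. -/
noncomputable def hKey {ι : Type*} (a : ι → ℕ) (w : (v : ι) → Fin (a v) → ℝ)
    (nb ε₁ ε₂ : ℝ) (v : ι) (p : ℝ) : ℝ :=
  (1 / ε₂ - 1 / p) * (a v : ℝ) ^ 2 * (wMean a w v) ^ 2 * nb
    + (1 / ε₁ - 1 / p) * (a v : ℝ) * ((wMean a w v) ^ 2 + wVar a w v) * nb ^ 2
    + (p / (ε₁ * ε₂) - 1 / ε₁ - 1 / ε₂ + 1 / p) *
        (a v : ℝ) * ((wMean a w v) ^ 2 + wVar a w v) * nb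
    + (1 / p - 1) * (a v : ℝ) ^ 2 * (wMean a w v) ^ 2 * nb ^ 2

theorem Finset.sup'_univ_le_two_mul_max {ι : Type*} [Fintype ι] [Nonempty ι] (f : ι → ℝ)
    (v₁ v₂ : ι) (h : ∀ v, f v ≤ f v₁ + f v₂) :
    Finset.univ.sup' Finset.univ_nonempty f ≤ 2 * max (f v₁) (f v₂) :=
  Finset.sup'_le _ _ fun v _ => by
    linarith [h v, le_max_left (f v₁) (f v₂), le_max_right (f v₁) (f v₂)]

noncomputable def meanCoeff (nb ε₂ p : ℝ) : ℝ :=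
  (1 / ε₂ - 1 / p) * nb + (1 / p - 1) * nb ^ 2

noncomputable def momentCoeff (nb ε₁ ε₂ p : ℝ) : ℝ :=
  (1 / ε₁ - 1 / p) * nb ^ 2 + (p / (ε₁ * ε₂) - 1 / ε₁ - 1 / ε₂ + 1 / p) * nb

theorem meanCoeff_nonneg {nb ε₂ p : ℝ} (hnb : 0 ≤ nb) (hε₂ : 0 < ε₂) (hε₂p : ε₂ ≤ p)
    (hp1 : p ≤ 1) : 0 ≤ meanCoeff nb ε₂ p := by
  have hp : 0 < p := hε₂.trans_le hε₂p
  have h₁ : 1 / p ≤ 1 / ε₂ := one_div_le_one_div_of_le hε₂ hε₂p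
  have h₂ : 1 ≤ 1 / p := one_le_one_div hp hp1
  unfold meanCoeff
  have := mul_nonneg (sub_nonneg.2 h₁) hnb
  have := mul_nonneg (sub_nonneg.2 h₂) (sq_nonneg nb)
  linarith

theorem momentCoeff_nonneg {nb ε₁ ε₂ p : ℝ} (hnb : 0 ≤ nb) (hε₁ : 0 < ε₁) (hε₂ : 0 < ε₂)
    (hε₁p : ε₁ ≤ p) (hε₂p : ε₂ ≤ p) : 0 ≤ momentCoeff nb ε₁ ε₂ p := by
  have hp : 0 < p := hε₁.trans_le hε₁p
  have hfactor : p / (ε₁ * ε₂) - 1 / ε₁ - 1 / ε₂ + 1 / p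
      = (p - ε₁) * (p - ε₂) / (p * ε₁ * ε₂) := by
    field_simp
    ring
  have h₁ : 1 / p ≤ 1 / ε₁ := one_div_le_one_div_of_le hε₁ hε₁p
  have h₂ : 0 ≤ (p - ε₁) * (p - ε₂) / (p * ε₁ * ε₂) :=
    div_nonneg (mul_nonneg (sub_nonneg.2 hε₁p) (sub_nonneg.2 hε₂p)) (by positivity)
  unfold momentCoeff
  rw [hfactor]
  have := mul_nonneg (sub_nonneg.2 h₁) (sq_nonneg nb)
  have := mul_nonneg h₂ hnb
  linarith

section hKey

variable {ι : Type*} (a : ι → ℕ) (w : (v : ι) → Fin (a v) → ℝ) (nb ε₁ ε₂ : ℝ)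

theorem hKey_eq (v : ι) (p : ℝ) :
    hKey a w nb ε₁ ε₂ v p
      = meanCoeff nb ε₂ p * ((a v : ℝ) ^ 2 * (wMean a w v) ^ 2)
        + momentCoeff nb ε₁ ε₂ p * ((a v : ℝ) * ((wMean a w v) ^ 2 + wVar a w v)) := by
  unfold hKey meanCoeff momentCoeff
  ring

variable {a w nb ε₁ ε₂}

theorem hKey_le_add {v₁ v₂ : ι} (hnb : 0 ≤ nb) (hε₁ : 0 < ε₁) (hε₂ : 0 < ε₂)
    (hv₁ : ∀ v, (a v : ℝ) ^ 2 * (wMean a w v) ^ 2 ≤ (a v₁ : ℝ) ^ 2 * (wMean a w v₁) ^ 2)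
    (hv₂ : ∀ v, (a v : ℝ) * ((wMean a w v) ^ 2 + wVar a w v)
      ≤ (a v₂ : ℝ) * ((wMean a w v₂) ^ 2 + wVar a w v₂))
    {p : ℝ} (hp : p ∈ Set.Icc (max ε₁ ε₂) 1) (v : ι) :
    hKey a w nb ε₁ ε₂ v p ≤ hKey a w nb ε₁ ε₂ v₁ p + hKey a w nb ε₁ ε₂ v₂ p := by
  obtain ⟨hεp, hp1⟩ := hp
  rw [max_le_iff] at hεp
  have hc₁ := meanCoeff_nonneg hnb hε₂ hεp.2 hp1
  have hc₂ := momentCoeff_nonneg hnb hε₁ hε₂ hεp.1 hεp.2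
  have hB₁ : 0 ≤ (a v₁ : ℝ) * ((wMean a w v₁) ^ 2 + wVar a w v₁) := by
    have := wVar_nonneg a w v₁
    positivity
  have hA₂ : 0 ≤ (a v₂ : ℝ) ^ 2 * (wMean a w v₂) ^ 2 := by positivity
  rw [hKey_eq, hKey_eq, hKey_eq]
  linarith [mul_le_mul_of_nonneg_left (hv₁ v) hc₁, mul_le_mul_of_nonneg_left (hv₂ v) hc₂,
    mul_nonneg hc₂ hB₁, mul_nonneg hc₁ hA₂]

end hKey

theorem two_point_rule_near_optimal_for_sum_general
    {ι : Type*} [Fintype ι] [Nonempty ι] (a : ι → ℕ) (w : (v : ι) → Fin (a v) → ℝ)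
    (nb : ℝ) (hnb : 0 < nb)
    (ε₁ ε₂ : ℝ) (hε₁0 : 0 < ε₁) (hε₂0 : 0 < ε₂)
    (v₁ v₂ : ι)
    (hv₁ : ∀ v, (a v : ℝ) ^ 2 * (wMean a w v) ^ 2 ≤ (a v₁ : ℝ) ^ 2 * (wMean a w v₁) ^ 2)
    (hv₂ : ∀ v, (a v : ℝ) * ((wMean a w v) ^ 2 + wVar a w v)
      ≤ (a v₂ : ℝ) * ((wMean a w v₂) ^ 2 + wVar a w v₂))
    (p' pstar : ℝ)
    (hp' : p' ∈ Set.Icc (max ε₁ ε₂) 1) (hpstar : pstar ∈ Set.Icc (max ε₁ ε₂) 1)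
    (hp'min : ∀ p ∈ Set.Icc (max ε₁ ε₂) 1,
      max (hKey a w nb ε₁ ε₂ v₁ p') (hKey a w nb ε₁ ε₂ v₂ p')
        ≤ max (hKey a w nb ε₁ ε₂ v₁ p) (hKey a w nb ε₁ ε₂ v₂ p)) :
    Finset.univ.sup' Finset.univ_nonempty (fun v => hKey a w nb ε₁ ε₂ v p')
      ≤ 2 * Finset.univ.sup' Finset.univ_nonempty (fun v => hKey a w nb ε₁ ε₂ v pstar) := by
  calc Finset.univ.sup' Finset.univ_nonempty (fun v => hKey a w nb ε₁ ε₂ v p')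
      ≤ 2 * max (hKey a w nb ε₁ ε₂ v₁ p') (hKey a w nb ε₁ ε₂ v₂ p') :=
        Finset.sup'_univ_le_two_mul_max _ v₁ v₂ (hKey_le_add hnb.le hε₁0 hε₂0 hv₁ hv₂ hp')
    _ ≤ 2 * max (hKey a w nb ε₁ ε₂ v₁ pstar) (hKey a w nb ε₁ ε₂ v₂ pstar) :=
        mul_le_mul_of_nonneg_left (hp'min pstar hpstar) zero_le_two
    _ ≤ 2 * Finset.univ.sup' Finset.univ_nonempty (fun v => hKey a w nb ε₁ ε₂ v pstar) :=
        mul_le_mul_of_nonneg_left (max_le (Finset.le_sup' (hKey a w nb ε₁ ε₂ · pstar)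
          (Finset.mem_univ v₁)) (Finset.le_sup' (hKey a w nb ε₁ ε₂ · pstar)
          (Finset.mem_univ v₂))) zero_le_two

/-- **Near-optimality of the two-point rule for decentralized SUM.**  If `p'` minimizes the
two-point envelope `h'(p) = max {h_{v₁}(p), h_{v₂}(p)}` over `[max ε₁ ε₂, 1]` and `p*`
minimizes the worst case `h*(p) = max_v h_v(p)` there, then `h*(p') ≤ 2 h*(p*)`. -/
theorem two_point_rule_near_optimal_for_sum
    {ι : Type*} [Fintype ι] [Nonempty ι] (a : ι → ℕ) (w : (v : ι) → Fin (a v) → ℝ)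
    (nb : ℝ) (hnb : 0 < nb)
    (ε₁ ε₂ : ℝ) (hε₁0 : 0 < ε₁) (hε₁1 : ε₁ ≤ 1) (hε₂0 : 0 < ε₂) (hε₂1 : ε₂ ≤ 1)
    (v₁ v₂ : ι)
    (hv₁ : ∀ v, (a v : ℝ) ^ 2 * (wMean a w v) ^ 2 ≤ (a v₁ : ℝ) ^ 2 * (wMean a w v₁) ^ 2)
    (hv₂ : ∀ v, (a v : ℝ) * ((wMean a w v) ^ 2 + wVar a w v)
      ≤ (a v₂ : ℝ) * ((wMean a w v₂) ^ 2 + wVar a w v₂))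
    (p' pstar : ℝ)
    (hp' : p' ∈ Set.Icc (max ε₁ ε₂) 1) (hpstar : pstar ∈ Set.Icc (max ε₁ ε₂) 1)
    (hp'min : ∀ p ∈ Set.Icc (max ε₁ ε₂) 1,
      max (hKey a w nb ε₁ ε₂ v₁ p') (hKey a w nb ε₁ ε₂ v₂ p')
        ≤ max (hKey a w nb ε₁ ε₂ v₁ p) (hKey a w nb ε₁ ε₂ v₂ p))
    (hpstarmin : ∀ p ∈ Set.Icc (max ε₁ ε₂) 1,
      Finset.univ.sup' Finset.univ_nonempty (fun v => hKey a w nb ε₁ ε₂ v pstar)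
        ≤ Finset.univ.sup' Finset.univ_nonempty (fun v => hKey a w nb ε₁ ε₂ v p)) :
    Finset.univ.sup' Finset.univ_nonempty (fun v => hKey a w nb ε₁ ε₂ v p')
      ≤ 2 * Finset.univ.sup' Finset.univ_nonempty (fun v => hKey a w nb ε₁ ε₂ v pstar) :=
  two_point_rule_near_optimal_for_sum_general a w nb hnb ε₁ ε₂ hε₁0 hε₂0 v₁ v₂ hv₁ hv₂ p' pstar hp'
    hpstar hp'min
end

section
/- (Covariance of the sampled-join SUM and COUNT, part of the AVG variance theorem.) In the UBS sum sampling model, with C = Z the sampled-join count and S the sampled-join sum (built from the same random family), Cov(S, C) = p q₁ q₂ · [ (1−q₂)·q₁·Σ_v (a v)² μ_v (b v) + (1−q₁)·q₂·Σ_v (a v) μ_v (b v)² + (1−q₁)(1−q₂)·Σ_v (a v) μ_v (b v) + (1−p)·q₁ q₂·Σ_v (a v)² μ_v (b v)² ]. -/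
open MeasureTheory ProbabilityTheory

/-!
Both sampled-join aggregates are linear combinations of the monomials `U_v ξ_{v,i} η_{v,j}`, so by
bilinearity `Cov(S, C)` is a double sum of covariances of two monomials. Since the variables are
independent and `{0,1}`-valued (hence idempotent), the product of two monomials is the product of
the *distinct* variables occurring in them, whose expectation is
`p ^ #{v, v'} * q₁ ^ #{(v,i), (v',i')} * q₂ ^ #{(v,j), (v',j')}`. The covariance of two monomials
therefore vanishes unless they share the key `v`, and the diagonal terms sum up through
`∑ i', q ^ #{i, i'} = q (1 - q) + q² a_v`.
-/

open Finset

theorem Finset.prod_pair_of_isIdempotentElem {α M : Type*} [CommMonoid M] [DecidableEq α]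
    {f : α → M} (hf : ∀ x, IsIdempotentElem (f x)) (x y : α) :
    ∏ k ∈ {x, y}, f k = f x * f y := by
  rcases eq_or_ne x y with rfl | hxy
  · simp [(hf x).eq]
  · exact prod_pair hxy

theorem pow_card_pair {α M : Type*} [Monoid M] [DecidableEq α] (c : M) (x y : α) :
    c ^ #{x, y} = if x = y then c else c ^ 2 := by
  split_ifs with h
  · simp [h]
  · rw [card_pair h]

theorem Fintype.sum_ite_eq_else_sq {α R : Type*} [Fintype α] [DecidableEq α] [CommRing R]
    (c : R) (x : α) :
    ∑ y, (if x = y then c else c ^ 2) = c * (1 - c) + c ^ 2 * Fintype.card α := by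
  have h (y : α) : (if x = y then c else c ^ 2) = c ^ 2 + if x = y then c * (1 - c) else 0 := by
    split_ifs <;> ring
  simp only [h, sum_add_distrib, sum_ite_eq, sum_const, card_univ, nsmul_eq_mul]
  ring

theorem sum_mul_sum_mul_sum_eq_sum_sigma {ι R : Type*} [Fintype ι] [CommSemiring R]
    {a b : ι → ℕ} (u : ι → R) (f : (v : ι) → Fin (a v) → R) (g : (v : ι) → Fin (b v) → R) :
    ∑ v, u v * (∑ i, f v i) * ∑ j, g v j
      = ∑ x : (Σ v, Fin (a v) × Fin (b v)), u x.1 * f x.1 x.2.1 * g x.1 x.2.2 := by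
  simp only [Fintype.sum_sigma, Fintype.sum_prod_type]
  exact sum_congr rfl fun v _ ↦ by rw [mul_sum _ _ (u v), sum_mul_sum]

theorem natCast_mul_wMean {ι : Type*} (a : ι → ℕ) (w : (v : ι) → Fin (a v) → ℝ) (v : ι) :
    (a v : ℝ) * wMean a w v = ∑ i, w v i := by
  rcases Nat.eq_zero_or_pos (a v) with h | h
  · have : IsEmpty (Fin (a v)) := by rw [h]; infer_instance
    simp [wMean]
  · rw [wMean, mul_div_cancel₀ _ (by positivity)]

theorem sum_sigma_mul_pow_card_pair_sub {ι R : Type*} [Fintype ι] [DecidableEq ι] [CommRing R]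
    (a b : ι → ℕ) (c : (v : ι) → Fin (a v) → R) (p q r : R) :
    ∑ x : (Σ v, Fin (a v) × Fin (b v)), ∑ y : (Σ v, Fin (a v) × Fin (b v)),
      c x.1 x.2.1 * (p ^ #{x.1, y.1}
        * q ^ #{(⟨x.1, x.2.1⟩ : Σ v, Fin (a v)), (⟨y.1, y.2.1⟩ : Σ v, Fin (a v))}
        * r ^ #{(⟨x.1, x.2.2⟩ : Σ v, Fin (b v)), (⟨y.1, y.2.2⟩ : Σ v, Fin (b v))}
        - (p * q * r) ^ 2)
      = ∑ v, (∑ i, c v i) * (p * (q * (1 - q) + q ^ 2 * a v) * (b v * (r * (1 - r) + r ^ 2 * b v))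
          - (p * q * r) ^ 2 * a v * b v ^ 2) := by
  rw [Fintype.sum_sigma]
  refine sum_congr rfl fun v _ ↦ ?_
  simp only [Fintype.sum_sigma (α := fun v ↦ Fin (a v) × Fin (b v))]
  have hoff (i : Fin (a v)) (j : Fin (b v)) (v' : ι) (hv' : v' ≠ v) (i' : Fin (a v'))
      (j' : Fin (b v')) :
      p ^ #{v, v'} * q ^ #{(⟨v, i⟩ : Σ v, Fin (a v)), (⟨v', i'⟩ : Σ v, Fin (a v))}
        * r ^ #{(⟨v, j⟩ : Σ v, Fin (b v)), (⟨v', j'⟩ : Σ v, Fin (b v))} - (p * q * r) ^ 2 = 0 := by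
    simp only [pow_card_pair, Sigma.mk.inj_iff, hv'.symm, false_and, if_false]
    ring
  have hdiag (i : Fin (a v)) (j : Fin (b v)) :
      ∑ i', ∑ j', c v i * (p * (if i = i' then q else q ^ 2) * (if j = j' then r else r ^ 2)
        - (p * q * r) ^ 2)
      = c v i * (p * (q * (1 - q) + q ^ 2 * a v) * (r * (1 - r) + r ^ 2 * b v)
        - (p * q * r) ^ 2 * a v * b v) := by
    have hq := Fintype.sum_ite_eq_else_sq q i
    have hr := Fintype.sum_ite_eq_else_sq r j
    rw [Fintype.card_fin] at hq hr
    simp only [mul_sub, sum_sub_distrib, sum_const, card_univ, Fintype.card_fin, nsmul_eq_mul,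
      ← mul_sum, ← sum_mul, hq, hr]
    ring
  calc _ = ∑ x : Fin (a v) × Fin (b v), ∑ i', ∑ j', c v x.1 * (p * (if x.1 = i' then q else q ^ 2)
          * (if x.2 = j' then r else r ^ 2) - (p * q * r) ^ 2) := by
        refine sum_congr rfl fun x _ ↦ ?_
        rw [Fintype.sum_eq_single v fun v' hv' ↦ sum_eq_zero fun y _ ↦ by
          rw [hoff x.1 x.2 v' hv', mul_zero], Fintype.sum_prod_type]
        simp only [pow_card_pair, Sigma.mk.inj_iff, heq_eq_eq, true_and, if_true]
    _ = _ := by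
        simp only [Fintype.sum_prod_type, hdiag]
        simp only [sum_const, card_univ, Fintype.card_fin, nsmul_eq_mul, ← mul_sum, ← sum_mul]
        ring

section

variable {Ω : Type*} [MeasurableSpace Ω] {μ : Measure Ω}

theorem integral_eq_of_isIdempotentElem {g : Ω → ℝ} (hg : Measurable g)
    (hidem : ∀ ω, IsIdempotentElem (g ω)) {c : ℝ} (hc : 0 ≤ c)
    (hμ : μ {ω | g ω = 1} = ENNReal.ofReal c) :
    ∫ ω, g ω ∂μ = c := by
  have hg_ind : g = {ω | g ω = 1}.indicator 1 := by
    funext ω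
    rcases IsIdempotentElem.iff_eq_zero_or_one.mp (hidem ω) with h | h <;>
      simp [Set.indicator, h]
  rw [hg_ind, integral_indicator_one (s := {ω | g ω = 1}) (hg (measurableSet_singleton 1)),
    measureReal_def, hμ, ENNReal.toReal_ofReal hc]

theorem memLp_of_isIdempotentElem [IsFiniteMeasure μ] {g : Ω → ℝ}
    (hg : AEStronglyMeasurable g μ) (hidem : ∀ ω, IsIdempotentElem (g ω)) (p : ENNReal) :
    MemLp g p μ :=
  memLp_of_bounded (a := 0) (b := 1) (ae_of_all _ fun ω ↦ by
    rcases IsIdempotentElem.iff_eq_zero_or_one.mp (hidem ω) with h | h <;> simp [h]) hg p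

theorem ProbabilityTheory.iIndepFun.integral_finset_prod {κ : Type*} {F : κ → Ω → ℝ}
    (hF : iIndepFun F μ) (hm : ∀ k, AEStronglyMeasurable (F k) μ) (s : Finset κ) :
    ∫ ω, ∏ k ∈ s, F k ω ∂μ = ∏ k ∈ s, ∫ ω, F k ω ∂μ := by
  simp only [← prod_coe_sort s]
  exact (hF.precomp Subtype.val_injective).integral_fun_prod_eq_prod_integral fun k ↦ hm k

variable {α β γ : Type*} {X : α → Ω → ℝ} {Y : β → Ω → ℝ} {Z : γ → Ω → ℝ}

theorem ProbabilityTheory.iIndepFun.integral_prod_mul_prod_mul_prod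
    (hind : iIndepFun (Sum.elim X (Sum.elim Y Z)) μ) (hX : ∀ x, AEStronglyMeasurable (X x) μ)
    (hY : ∀ y, AEStronglyMeasurable (Y y) μ) (hZ : ∀ z, AEStronglyMeasurable (Z z) μ)
    (A : Finset α) (B : Finset β) (C : Finset γ) :
    ∫ ω, (∏ x ∈ A, X x ω) * (∏ y ∈ B, Y y ω) * ∏ z ∈ C, Z z ω ∂μ
      = (∏ x ∈ A, ∫ ω, X x ω ∂μ) * (∏ y ∈ B, ∫ ω, Y y ω ∂μ) * ∏ z ∈ C, ∫ ω, Z z ω ∂μ := by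
  have h := hind.integral_finset_prod (by rintro (x | y | z) <;> simp [*])
    (A.disjSum (B.disjSum C))
  simpa only [prod_disjSum, Sum.elim_inl, Sum.elim_inr, mul_assoc] using h

theorem ProbabilityTheory.iIndepFun.covariance_mul_mul_of_isIdempotentElem
    [IsProbabilityMeasure μ] [DecidableEq α] [DecidableEq β] [DecidableEq γ]
    (hind : iIndepFun (Sum.elim X (Sum.elim Y Z)) μ)
    (hX : ∀ x, Measurable (X x)) (hY : ∀ y, Measurable (Y y)) (hZ : ∀ z, Measurable (Z z))
    (hXi : ∀ x ω, IsIdempotentElem (X x ω)) (hYi : ∀ y ω, IsIdempotentElem (Y y ω))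
    (hZi : ∀ z ω, IsIdempotentElem (Z z ω)) {p q r : ℝ} (hXp : ∀ x, ∫ ω, X x ω ∂μ = p)
    (hYq : ∀ y, ∫ ω, Y y ω ∂μ = q) (hZr : ∀ z, ∫ ω, Z z ω ∂μ = r) (x x' : α) (y y' : β)
    (z z' : γ) :
    cov[fun ω ↦ X x ω * Y y ω * Z z ω, fun ω ↦ X x' ω * Y y' ω * Z z' ω; μ]
      = p ^ #{x, x'} * q ^ #{y, y'} * r ^ #{z, z'} - (p * q * r) ^ 2 := by
  have hM (x y z) : MemLp (fun ω ↦ X x ω * Y y ω * Z z ω) 2 μ :=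
    memLp_of_isIdempotentElem (((hX x).mul (hY y)).mul (hZ z)).aestronglyMeasurable
      (fun ω ↦ ((hXi x ω).mul (hYi y ω)).mul (hZi z ω)) 2
  have hprod (A : Finset α) (B : Finset β) (C : Finset γ) :=
    hind.integral_prod_mul_prod_mul_prod (fun x ↦ (hX x).aestronglyMeasurable)
      (fun y ↦ (hY y).aestronglyMeasurable) (fun z ↦ (hZ z).aestronglyMeasurable) A B C
  have hmean (x y z) : ∫ ω, X x ω * Y y ω * Z z ω ∂μ = p * q * r := by
    simpa [hXp, hYq, hZr] using hprod {x} {y} {z}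
  have hsecond : ∫ ω, X x ω * Y y ω * Z z ω * (X x' ω * Y y' ω * Z z' ω) ∂μ
      = p ^ #{x, x'} * q ^ #{y, y'} * r ^ #{z, z'} := by
    have h := hprod {x, x'} {y, y'} {z, z'}
    simp only [prod_pair_of_isIdempotentElem (hXi · _), prod_pair_of_isIdempotentElem (hYi · _),
      prod_pair_of_isIdempotentElem (hZi · _), hXp, hYq, hZr, prod_const] at h
    rw [← h]
    congr 1 with ω
    ring
  rw [covariance_eq_sub (hM x y z) (hM x' y' z')]
  simp only [Pi.mul_apply, hsecond, hmean]
  ring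

end

theorem covariance_sampled_sum_count_general
    {Ω : Type*} [MeasurableSpace Ω] (μ : Measure Ω) [IsProbabilityMeasure μ]
    {ι : Type*} [Fintype ι]
    (a b : ι → ℕ) (w : (v : ι) → Fin (a v) → ℝ) (p q₁ q₂ : ℝ)
    (hp : 0 < p) (hq₁ : 0 < q₁) (hq₂ : 0 < q₂)
    (U : ι → Ω → ℝ) (ξ : (v : ι) → Fin (a v) → Ω → ℝ) (η : (v : ι) → Fin (b v) → Ω → ℝ)
    (hUm : ∀ v, Measurable (U v))
    (hξm : ∀ v i, Measurable (ξ v i))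
    (hηm : ∀ v j, Measurable (η v j))
    (hU01 : ∀ v ω, U v ω = 0 ∨ U v ω = 1)
    (hξ01 : ∀ v i ω, ξ v i ω = 0 ∨ ξ v i ω = 1)
    (hη01 : ∀ v j ω, η v j ω = 0 ∨ η v j ω = 1)
    (hUp : ∀ v, μ {ω | U v ω = 1} = ENNReal.ofReal p)
    (hξq : ∀ v i, μ {ω | ξ v i ω = 1} = ENNReal.ofReal q₁)
    (hηq : ∀ v j, μ {ω | η v j ω = 1} = ENNReal.ofReal q₂)
    (hIndep : iIndepFun
      (Sum.elim (fun v : ι => U v)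
        (Sum.elim (fun vi : Σ v : ι, Fin (a v) => ξ vi.1 vi.2)
                  (fun vj : Σ v : ι, Fin (b v) => η vj.1 vj.2))) μ) :
    (∫ ω, (∑ v, U v ω * (∑ i, ξ v i ω * w v i) * (∑ j, η v j ω)) *
          (∑ v, U v ω * (∑ i, ξ v i ω) * (∑ j, η v j ω)) ∂μ)
      - (∫ ω, ∑ v, U v ω * (∑ i, ξ v i ω * w v i) * (∑ j, η v j ω) ∂μ) *
        (∫ ω, ∑ v, U v ω * (∑ i, ξ v i ω) * (∑ j, η v j ω) ∂μ)
      = p * q₁ * q₂ *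
          ((1 - q₂) * q₁ * (∑ v, (a v : ℝ) ^ 2 * wMean a w v * (b v : ℝ))
            + (1 - q₁) * q₂ * (∑ v, (a v : ℝ) * wMean a w v * (b v : ℝ) ^ 2)
            + (1 - q₁) * (1 - q₂) * (∑ v, (a v : ℝ) * wMean a w v * (b v : ℝ))
            + (1 - p) * q₁ * q₂ * (∑ v, (a v : ℝ) ^ 2 * wMean a w v * (b v : ℝ) ^ 2)) := by
  classical
  simp only [← IsIdempotentElem.iff_eq_zero_or_one] at hU01 hξ01 hη01
  let M (x : Σ v, Fin (a v) × Fin (b v)) (ω : Ω) : ℝ := U x.1 ω * ξ x.1 x.2.1 ω * η x.1 x.2.2 ω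
  have hM (x) : MemLp (M x) 2 μ :=
    memLp_of_isIdempotentElem (((hUm _).mul (hξm _ _)).mul (hηm _ _)).aestronglyMeasurable
      (fun ω ↦ ((hU01 _ ω).mul (hξ01 _ _ ω)).mul (hη01 _ _ ω)) 2
  have hS (ω) : ∑ v, U v ω * (∑ i, ξ v i ω * w v i) * ∑ j, η v j ω = ∑ x, w x.1 x.2.1 * M x ω := by
    rw [sum_mul_sum_mul_sum_eq_sum_sigma]
    exact sum_congr rfl fun x _ ↦ by ring
  have hcov (x y : Σ v, Fin (a v) × Fin (b v)) :=
    hIndep.covariance_mul_mul_of_isIdempotentElem hUm (fun vi ↦ hξm vi.1 vi.2)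
      (fun vj ↦ hηm vj.1 vj.2) hU01 (fun vi ↦ hξ01 vi.1 vi.2) (fun vj ↦ hη01 vj.1 vj.2)
      (fun v ↦ integral_eq_of_isIdempotentElem (hUm v) (hU01 v) hp.le (hUp v))
      (fun vi ↦ integral_eq_of_isIdempotentElem (hξm _ _) (hξ01 _ _) hq₁.le (hξq vi.1 vi.2))
      (fun vj ↦ integral_eq_of_isIdempotentElem (hηm _ _) (hη01 _ _) hq₂.le (hηq vj.1 vj.2))
      x.1 y.1 ⟨x.1, x.2.1⟩ ⟨y.1, y.2.1⟩ ⟨x.1, x.2.2⟩ ⟨y.1, y.2.2⟩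
  calc _ = cov[fun ω ↦ ∑ x, w x.1 x.2.1 * M x ω, fun ω ↦ ∑ x, M x ω; μ] := by
        rw [covariance_eq_sub (memLp_finsetSum _ fun x _ ↦ (hM x).const_mul _)
          (memLp_finsetSum _ fun x _ ↦ hM x)]
        simp only [Pi.mul_apply, hS, sum_mul_sum_mul_sum_eq_sum_sigma, M]
    _ = ∑ x, ∑ y, w x.1 x.2.1 * cov[M x, M y; μ] := by
        rw [covariance_fun_sum_fun_sum (fun x ↦ (hM x).const_mul _) hM]
        simp only [covariance_const_mul_left]
    _ = _ := by
        simp only [M, hcov, sum_sigma_mul_pow_card_pair_sub, ← natCast_mul_wMean, mul_sum,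
          ← sum_add_distrib]
        exact sum_congr rfl fun v _ ↦ by ring

/-- **Covariance of the sampled-join SUM and COUNT.**  With `C` the sampled-join count and
`S` the sampled-join sum built from the same UBS random family,
`Cov(S, C) = p q₁ q₂ · [(1−q₂) q₁ ∑ a_v² μ_v b_v + (1−q₁) q₂ ∑ a_v μ_v b_v²
+ (1−q₁)(1−q₂) ∑ a_v μ_v b_v + (1−p) q₁ q₂ ∑ a_v² μ_v b_v²]`
(covariance written as `E[SC] − E[S]E[C]`). -/
theorem covariance_sampled_sum_count
    {Ω : Type*} [MeasurableSpace Ω] (μ : Measure Ω) [IsProbabilityMeasure μ]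
    {ι : Type*} [Fintype ι]
    (a b : ι → ℕ) (w : (v : ι) → Fin (a v) → ℝ) (p q₁ q₂ : ℝ)
    (hp : 0 < p) (hp1 : p ≤ 1) (hq₁ : 0 < q₁) (hq₁1 : q₁ ≤ 1) (hq₂ : 0 < q₂) (hq₂1 : q₂ ≤ 1)
    (U : ι → Ω → ℝ) (ξ : (v : ι) → Fin (a v) → Ω → ℝ) (η : (v : ι) → Fin (b v) → Ω → ℝ)
    (hUm : ∀ v, Measurable (U v))
    (hξm : ∀ v i, Measurable (ξ v i))
    (hηm : ∀ v j, Measurable (η v j))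
    (hU01 : ∀ v ω, U v ω = 0 ∨ U v ω = 1)
    (hξ01 : ∀ v i ω, ξ v i ω = 0 ∨ ξ v i ω = 1)
    (hη01 : ∀ v j ω, η v j ω = 0 ∨ η v j ω = 1)
    (hUp : ∀ v, μ {ω | U v ω = 1} = ENNReal.ofReal p)
    (hξq : ∀ v i, μ {ω | ξ v i ω = 1} = ENNReal.ofReal q₁)
    (hηq : ∀ v j, μ {ω | η v j ω = 1} = ENNReal.ofReal q₂)
    (hIndep : iIndepFun
      (Sum.elim (fun v : ι => U v)
        (Sum.elim (fun vi : Σ v : ι, Fin (a v) => ξ vi.1 vi.2)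
                  (fun vj : Σ v : ι, Fin (b v) => η vj.1 vj.2))) μ) :
    (∫ ω, (∑ v, U v ω * (∑ i, ξ v i ω * w v i) * (∑ j, η v j ω)) *
          (∑ v, U v ω * (∑ i, ξ v i ω) * (∑ j, η v j ω)) ∂μ)
      - (∫ ω, ∑ v, U v ω * (∑ i, ξ v i ω * w v i) * (∑ j, η v j ω) ∂μ) *
        (∫ ω, ∑ v, U v ω * (∑ i, ξ v i ω) * (∑ j, η v j ω) ∂μ)
      = p * q₁ * q₂ *
          ((1 - q₂) * q₁ * (∑ v, (a v : ℝ) ^ 2 * wMean a w v * (b v : ℝ))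
            + (1 - q₁) * q₂ * (∑ v, (a v : ℝ) * wMean a w v * (b v : ℝ) ^ 2)
            + (1 - q₁) * (1 - q₂) * (∑ v, (a v : ℝ) * wMean a w v * (b v : ℝ))
            + (1 - p) * q₁ * q₂ * (∑ v, (a v : ℝ) ^ 2 * wMean a w v * (b v : ℝ) ^ 2)) :=
  covariance_sampled_sum_count_general μ a b w p q₁ q₂ hp hq₁ hq₂ U ξ η hUm hξm hηm hU01 hξ01 hη01
    hUp hξq hηq hIndep
end

section
/- (Matching the lower bound up to a constant for primary-key joins.) In the UBS sampling model, suppose a_v ≤ 1 for every v ∈ ι (a primary-key table T₁), let ε ∈ (0,1], and take universe rate p = ε and uniform rates q₁ = q₂ = 1. Then Var(Ĵ_count) = (1/ε − 1)·Σ_{v∈ι} (a v)·(b v)². In particular, if additionally b_v ≤ c for every v and some natural c, then Var(Ĵ_count) ≤ c·(1/ε − 1)·J, where J = Σ_v (a v)(b v) is the join size. -/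
/-!
With `q₁ = q₂ = 1` every tuple survives almost surely, so `Σ i ξ_{v,i} = a_v` and
`Σ j η_{v,j} = b_v` a.s., and the estimator is a.s. `ε⁻¹ Σ_v a_v b_v U_v`, a weighted sum of
independent Bernoulli(ε) variables. Its variance is `ε⁻² Σ_v (a_v b_v)² ε (1 - ε)`, and
`a_v² = a_v` because `a_v ∈ {0, 1}`. The bound follows from `a_v b_v² ≤ c a_v b_v`.
-/

open MeasureTheory ProbabilityTheory

section Probability

variable {Ω : Type*} [MeasurableSpace Ω] {μ : Measure Ω}

theorem ae_sum_eq_card_of_measure_eq_one [IsProbabilityMeasure μ] {κ : Type*} [Fintype κ]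
    {X : κ → Ω → ℝ} (hX : ∀ i, Measurable (X i)) (hX1 : ∀ i, μ {ω | X i ω = 1} = 1) :
    ∀ᵐ ω ∂μ, ∑ i, X i ω = Fintype.card κ := by
  have hall : ∀ᵐ ω ∂μ, ∀ i, X i ω = 1 :=
    ae_all_iff.2 fun i =>
      (mem_ae_iff_prob_eq_one (measurableSet_eq_fun (hX i) measurable_const)).2 (hX1 i)
  filter_upwards [hall] with ω hω
  simp [hω]

theorem memLp_two_of_zero_or_one [IsFiniteMeasure μ] {X : Ω → ℝ} (hX : Measurable X)
    (h01 : ∀ ω, X ω = 0 ∨ X ω = 1) : MemLp X 2 μ := by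
  refine (memLp_top_of_bound hX.aestronglyMeasurable 1 (ae_of_all _ fun ω => ?_)).mono_exponent
    le_top
  rcases h01 ω with h | h <;> simp [h]

theorem variance_of_zero_or_one_of_measure_eq [IsProbabilityMeasure μ] {X : Ω → ℝ}
    (hX : Measurable X) (h01 : ∀ ω, X ω = 0 ∨ X ω = 1) {p : ℝ} (hp : 0 ≤ p)
    (hX1 : μ {ω | X ω = 1} = ENNReal.ofReal p) :
    variance X μ = (1 - p) * p := by
  have hset : MeasurableSet {ω | X ω = 1} := measurableSet_eq_fun hX measurable_const
  have hzero : {ω | X ω = 0} = {ω | X ω = 1}ᶜ := by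
    ext ω
    rcases h01 ω with h | h <;> simp [h]
  have hreal : μ.real {ω | X ω = 1} = p := by
    rw [measureReal_def, hX1, ENNReal.toReal_ofReal hp]
  rw [variance_of_ae_eq_zero_or_one hX.aemeasurable (ae_of_all _ h01), hzero,
    probReal_compl_eq_one_sub hset, hreal]

theorem variance_sum_const_mul_of_iIndepFun {ι : Type*} [Fintype ι] {X : ι → Ω → ℝ}
    (c : ι → ℝ) (hX : ∀ i, MemLp (X i) 2 μ) (hind : iIndepFun X μ) :
    variance (fun ω => ∑ i, c i * X i ω) μ = ∑ i, c i ^ 2 * variance (X i) μ := by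
  have hsum : (fun ω => ∑ i, c i * X i ω) = ∑ i, fun ω => c i * X i ω := by
    ext ω
    simp
  rw [hsum, IndepFun.variance_sum (fun i _ => (hX i).const_mul (c i))
    fun i _ j _ hij => (hind.indepFun hij).comp (measurable_const_mul (c i))
      (measurable_const_mul (c j))]
  simp_rw [variance_const_mul]

end Probability

theorem sum_mul_sq_le_mul_sum_mul {ι : Type*} (s : Finset ι) (a b : ι → ℕ) {c : ℕ}
    (hb : ∀ v, b v ≤ c) : ∑ v ∈ s, a v * b v ^ 2 ≤ c * ∑ v ∈ s, a v * b v := by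
  rw [Finset.mul_sum]
  refine Finset.sum_le_sum fun v _ => ?_
  calc a v * b v ^ 2 = a v * b v * b v := by ring
    _ ≤ a v * b v * c := Nat.mul_le_mul_left _ (hb v)
    _ = c * (a v * b v) := by ring

theorem pk_join_variance_matches_lower_bound_general
    {Ω : Type*} [MeasurableSpace Ω] (μ : Measure Ω) [IsProbabilityMeasure μ]
    {ι : Type*} [Fintype ι]
    (a b : ι → ℕ) (ha : ∀ v, a v ≤ 1) (ε : ℝ)
    (hε : 0 < ε) (hε1 : ε ≤ 1)
    (U : ι → Ω → ℝ) (ξ : (v : ι) → Fin (a v) → Ω → ℝ) (η : (v : ι) → Fin (b v) → Ω → ℝ)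
    (hUm : ∀ v, Measurable (U v))
    (hξm : ∀ v i, Measurable (ξ v i))
    (hηm : ∀ v j, Measurable (η v j))
    (hU01 : ∀ v ω, U v ω = 0 ∨ U v ω = 1)
    (hUp : ∀ v, μ {ω | U v ω = 1} = ENNReal.ofReal ε)
    (hξq : ∀ v i, μ {ω | ξ v i ω = 1} = ENNReal.ofReal 1)
    (hηq : ∀ v j, μ {ω | η v j ω = 1} = ENNReal.ofReal 1)
    (hIndep : iIndepFun (m := fun _ => (inferInstance : MeasurableSpace ℝ))
      (Sum.elim (fun v : ι => U v)
        (Sum.elim (fun vi : Σ v : ι, Fin (a v) => ξ vi.1 vi.2)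
                  (fun vj : Σ v : ι, Fin (b v) => η vj.1 vj.2))) μ) :
    variance (fun ω => (1 / (ε * 1 * 1)) *
        ∑ v, U v ω * (∑ i, ξ v i ω) * (∑ j, η v j ω)) μ
      = (1 / ε - 1) * (∑ v, (a v : ℝ) * (b v : ℝ) ^ 2) ∧
    (∀ c : ℕ, (∀ v, b v ≤ c) →
      variance (fun ω => (1 / (ε * 1 * 1)) *
          ∑ v, U v ω * (∑ i, ξ v i ω) * (∑ j, η v j ω)) μ
        ≤ (c : ℝ) * (1 / ε - 1) * (∑ v, (a v : ℝ) * (b v : ℝ))) := by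
  have hsums : ∀ᵐ ω ∂μ, ∀ v, (∑ i, ξ v i ω) = a v ∧ (∑ j, η v j ω) = b v :=
    ae_all_iff.2 fun v => by
      filter_upwards [ae_sum_eq_card_of_measure_eq_one (hξm v) fun i => (hξq v i).trans
          ENNReal.ofReal_one,
        ae_sum_eq_card_of_measure_eq_one (hηm v) fun j => (hηq v j).trans ENNReal.ofReal_one]
        with ω hξω hηω
      simp [hξω, hηω]
  have hest : (fun ω => (1 / (ε * 1 * 1)) * ∑ v, U v ω * (∑ i, ξ v i ω) * (∑ j, η v j ω))
      =ᵐ[μ] fun ω => ε⁻¹ * ∑ v, ((a v : ℝ) * b v) * U v ω := by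
    filter_upwards [hsums] with ω hω
    simp only [hω, mul_one, one_div]
    congr 1
    exact Finset.sum_congr rfl fun v _ => by ring
  have hUind : iIndepFun U μ := hIndep.precomp (g := Sum.inl) Sum.inl_injective
  have ha_sq : ∀ v, (a v : ℝ) ^ 2 = a v := fun v => by
    rcases Nat.le_one_iff_eq_zero_or_eq_one.1 (ha v) with h | h <;> simp [h]
  have hvar : variance (fun ω => (1 / (ε * 1 * 1)) *
      ∑ v, U v ω * (∑ i, ξ v i ω) * (∑ j, η v j ω)) μ
        = (1 / ε - 1) * (∑ v, (a v : ℝ) * (b v : ℝ) ^ 2) := by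
    rw [variance_congr hest, variance_const_mul, variance_sum_const_mul_of_iIndepFun _
      (fun v => memLp_two_of_zero_or_one (hUm v) (hU01 v)) hUind, Finset.mul_sum,
      Finset.mul_sum]
    refine Finset.sum_congr rfl fun v _ => ?_
    rw [variance_of_zero_or_one_of_measure_eq (hUm v) (hU01 v) hε.le (hUp v), mul_pow, ha_sq]
    field_simp
  refine ⟨hvar, fun c hc => ?_⟩
  have hε_inv : 0 ≤ 1 / ε - 1 := sub_nonneg.2 (one_le_one_div hε hε1)
  have hsum : ∑ v, (a v : ℝ) * (b v : ℝ) ^ 2 ≤ c * ∑ v, (a v : ℝ) * (b v : ℝ) := by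
    exact_mod_cast sum_mul_sq_le_mul_sum_mul Finset.univ a b hc
  rw [hvar, mul_comm (c : ℝ), mul_assoc]
  exact mul_le_mul_of_nonneg_left hsum hε_inv

/-- **Matching the lower bound up to a constant for primary-key joins.**
In the UBS sampling model with `a_v ≤ 1` for all `v` (a primary-key table `T₁`), universe
rate `p = ε` and uniform rates `q₁ = q₂ = 1`, the count estimator has variance
`(1/ε − 1)·∑ v, a_v b_v²`; in particular, if `b_v ≤ c` for all `v`, the variance is at most
`c·(1/ε − 1)·J` where `J = ∑ v, a_v b_v` is the join size. -/
theorem pk_join_variance_matches_lower_bound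
    {Ω : Type*} [MeasurableSpace Ω] (μ : Measure Ω) [IsProbabilityMeasure μ]
    {ι : Type*} [Fintype ι]
    (a b : ι → ℕ) (ha : ∀ v, a v ≤ 1) (ε : ℝ)
    (hε : 0 < ε) (hε1 : ε ≤ 1)
    (U : ι → Ω → ℝ) (ξ : (v : ι) → Fin (a v) → Ω → ℝ) (η : (v : ι) → Fin (b v) → Ω → ℝ)
    (hUm : ∀ v, Measurable (U v))
    (hξm : ∀ v i, Measurable (ξ v i))
    (hηm : ∀ v j, Measurable (η v j))
    (hU01 : ∀ v ω, U v ω = 0 ∨ U v ω = 1)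
    (hξ01 : ∀ v i ω, ξ v i ω = 0 ∨ ξ v i ω = 1)
    (hη01 : ∀ v j ω, η v j ω = 0 ∨ η v j ω = 1)
    (hUp : ∀ v, μ {ω | U v ω = 1} = ENNReal.ofReal ε)
    (hξq : ∀ v i, μ {ω | ξ v i ω = 1} = ENNReal.ofReal 1)
    (hηq : ∀ v j, μ {ω | η v j ω = 1} = ENNReal.ofReal 1)
    (hIndep : iIndepFun (m := fun _ => (inferInstance : MeasurableSpace ℝ))
      (Sum.elim (fun v : ι => U v)
        (Sum.elim (fun vi : Σ v : ι, Fin (a v) => ξ vi.1 vi.2)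
                  (fun vj : Σ v : ι, Fin (b v) => η vj.1 vj.2))) μ) :
    variance (fun ω => (1 / (ε * 1 * 1)) *
        ∑ v, U v ω * (∑ i, ξ v i ω) * (∑ j, η v j ω)) μ
      = (1 / ε - 1) * (∑ v, (a v : ℝ) * (b v : ℝ) ^ 2) ∧
    (∀ c : ℕ, (∀ v, b v ≤ c) →
      variance (fun ω => (1 / (ε * 1 * 1)) *
          ∑ v, U v ω * (∑ i, ξ v i ω) * (∑ j, η v j ω)) μ
        ≤ (c : ℝ) * (1 / ε - 1) * (∑ v, (a v : ℝ) * (b v : ℝ))) :=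
  pk_join_variance_matches_lower_bound_general μ a b ha ε hε hε1 U ξ η hUm hξm hηm hU01 hUp hξq hηq
    hIndep
end
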